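/- arXiv:1606.06860 — 3 statements merged into one kernel-verified Lean document; each statement's English description precedes it below -/
import Mathlib

section
/- If a finite nilpotent group G has the cut-property, then every prime dividing the order of G is 2 or 3. -/
def HasCut (G : Type*) [Group G] : Prop :=
  ∀ u : (MonoidAlgebra ℤ G)ˣ,
    (↑u : MonoidAlgebra ℤ G) ∈ Subring.center (MonoidAlgebra ℤ G) →
      ∃ g ∈ Subgroup.center G,
        (↑u : MonoidAlgebra ℤ G) = MonoidAlgebra.of ℤ G g ∨
        (↑u : MonoidAlgebra ℤ G) = -(MonoidAlgebra.of ℤ G g)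

open Subgroup in
theorem exists_central_orderOf_eq {G : Type*} [Group G] [Finite G]
    [Group.IsNilpotent G] (p : ℕ) (hp : p.Prime) (hdvd : p ∣ Nat.card G) :
    ∃ g ∈ Subgroup.center G, orderOf g = p := by
  classical
  haveI : Fact p.Prime := ⟨hp⟩
  have htfae := ((isNilpotent_of_finite_tfae (G := G)).out 0 4).mp ‹Group.IsNilpotent G›
  obtain ⟨e⟩ := htfae
  have hcardG : Nat.card G ≠ 0 := Nat.card_pos.ne'
  have hpmem : p ∈ (Nat.card G).primeFactors :=
    Nat.mem_primeFactors.mpr ⟨hp, hdvd, hcardG⟩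
  set pp : (Nat.card G).primeFactors := ⟨p, hpmem⟩ with hpp
  -- pick a Sylow p-subgroup
  obtain ⟨P⟩ := (Sylow.nonempty : Nonempty (Sylow ((pp : ℕ)) G))
  have hfac : 0 < (Nat.card G).factorization p :=
    Nat.Prime.factorization_pos_of_dvd hp hcardG hdvd
  have hpP : p ∣ Nat.card P := by
    rw [Sylow.card_eq_multiplicity]
    exact dvd_pow_self p hfac.ne'
  haveI : Nontrivial (↥(P : Subgroup G)) := by
    rw [← Finite.one_lt_card_iff_nontrivial]
    have h1 : Nat.card ↥(P : Subgroup G) ≠ 1 := fun h =>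
      hp.one_lt.ne' (Nat.dvd_one.mp (h ▸ hpP))
    have h0 : 0 < Nat.card ↥(P : Subgroup G) := Nat.card_pos
    omega
  -- center of P is a nontrivial p-group, so has an element of order p
  haveI : Nontrivial (center ↥(P : Subgroup G)) := P.isPGroup'.center_nontrivial
  have hZp : IsPGroup p (center ↥(P : Subgroup G)) := by
    have := P.isPGroup'.to_subgroup (center ↥(P : Subgroup G))
    exact this
  have hpZ : p ∣ Nat.card (center ↥(P : Subgroup G)) := by
    obtain ⟨n, hn0, hn⟩ := hZp.nontrivial_iff_card.mp inferInstance
    rw [hn]; exact dvd_pow_self p hn0.ne'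
  obtain ⟨z, hz⟩ := exists_prime_orderOf_dvd_card' p hpZ
  set z' : ↥(P : Subgroup G) := z.val with hz'
  have hz'ord : orderOf z' = p := by
    have : orderOf ((center ↥(P : Subgroup G)).subtype z) = orderOf z :=
      orderOf_injective (center ↥(P : Subgroup G)).subtype Subtype.coe_injective z
    exact this.trans hz
  have hz'c : z' ∈ center ↥(P : Subgroup G) := z.2
  let F : (Nat.card G).primeFactors → Type _ :=
    fun q => ∀ Q : Sylow (q : ℕ) G, ↥(Q : Subgroup G)
  let inner : F pp := Pi.mulSingle P z'
  let x : ∀ q, F q := Pi.mulSingle pp inner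
  have hxord : orderOf x = p := by
    have h1 : orderOf x = orderOf inner :=
      orderOf_injective (MonoidHom.mulSingle F pp) (Pi.mulSingle_injective (M := F) pp) inner
    have h2 : orderOf inner = orderOf z' :=
      orderOf_injective
        (MonoidHom.mulSingle (fun Q : Sylow ((pp : ℕ)) G => ↥(Q : Subgroup G)) P)
        (Pi.mulSingle_injective (M := fun Q : Sylow ((pp : ℕ)) G => ↥(Q : Subgroup G)) P) z'
    rw [h1, h2, hz'ord]
  have hx_same : x pp P = z' := by
    show Pi.mulSingle pp inner pp P = z'
    rw [Pi.mulSingle_eq_same]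
    exact Pi.mulSingle_eq_same (M := fun Q : Sylow ((pp : ℕ)) G => ↥(Q : Subgroup G)) P z'
  have hx_ne1 : ∀ Q : Sylow ((pp : ℕ)) G, Q ≠ P → x pp Q = 1 := by
    intro Q hQ
    show Pi.mulSingle pp inner pp Q = 1
    rw [Pi.mulSingle_eq_same]
    exact Pi.mulSingle_eq_of_ne (M := fun Q : Sylow ((pp : ℕ)) G => ↥(Q : Subgroup G)) hQ z'
  have hx_ne2 : ∀ q, q ≠ pp → x q = 1 := fun q hq => Pi.mulSingle_eq_of_ne hq inner
  have hxc : ∀ y, y * x = x * y := by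
    intro y
    funext q Q
    show y q Q * x q Q = x q Q * y q Q
    by_cases hq : q = pp
    · subst hq
      by_cases hQ : Q = P
      · rw [hQ, hx_same]
        exact Subgroup.mem_center_iff.mp hz'c (y pp P)
      · rw [hx_ne1 Q hQ, mul_one, one_mul]
    · have : x q Q = 1 := by rw [hx_ne2 q hq]; rfl
      rw [this, mul_one, one_mul]
  refine ⟨e x, ?_, ?_⟩
  · rw [Subgroup.mem_center_iff]
    intro y
    have hc := hxc (e.symm y)
    calc y * e x = e (e.symm y) * e x := by rw [e.apply_symm_apply]
      _ = e (e.symm y * x) := (map_mul e _ _).symm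
      _ = e (x * e.symm y) := by rw [hc]
      _ = e x * y := by rw [map_mul e, e.apply_symm_apply]
  · rw [← hxord]
    exact orderOf_injective e.toMonoidHom e.injective x

noncomputable section CutAux
namespace CutAux

variable {p : ℕ} [Fact p.Prime]


variable {p : ℕ} [Fact p.Prime]

noncomputable def s (p : ℕ) [Fact p.Prime] (j : ZMod p) : ℤ :=
  (-1) ^ ((j * (3 : ZMod p)⁻¹).val)

noncomputable def c (p : ℕ) [Fact p.Prime] (j : ZMod p) : ℤ :=
  if s p (j - 1) = s p (j - 2) then s p (j - 1) else 0

lemma s_pm (j : ZMod p) : s p j = 1 ∨ s p j = -1 := by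
  unfold s
  rcases Nat.even_or_odd ((j * (3 : ZMod p)⁻¹).val) with he | ho
  · left; exact he.neg_one_pow
  · right; exact ho.neg_one_pow

lemma three_ne_zero' (hp5 : 5 ≤ p) : (3 : ZMod p) ≠ 0 := by
  have hp := (Fact.out : p.Prime)
  intro h
  have h3 : ((3 : ℕ) : ZMod p) = 0 := by exact_mod_cast h
  have : (p : ℕ) ∣ 3 := (ZMod.natCast_eq_zero_iff 3 p).mp h3
  have := Nat.le_of_dvd (by norm_num) this
  omega

lemma val_neg_one' (hp5 : 5 ≤ p) : (-1 : ZMod p).val = p - 1 := by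
  have hp := (Fact.out : p.Prime)
  have h1 : (-1 : ZMod p) = ((p - 1 : ℕ) : ZMod p) := by
    have hcast : ((p - 1 : ℕ) : ZMod p) = (p : ZMod p) - 1 := by
      push_cast [Nat.cast_sub (by omega : 1 ≤ p)]
      ring
    rw [hcast, ZMod.natCast_self]
    ring
  rw [h1, ZMod.val_natCast_of_lt (by omega)]

lemma even_p_sub_one (hp5 : 5 ≤ p) : Even (p - 1) := by
  have hp := (Fact.out : p.Prime)
  have hodd : Odd p := hp.odd_of_ne_two (by omega)
  rcases hodd with ⟨k, hk⟩
  exact ⟨k, by omega⟩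

lemma s_zero : s p 0 = 1 := by simp [s]

lemma s_neg_three (hp5 : 5 ≤ p) : s p (-3) = 1 := by
  have h3 : (3 : ZMod p) ≠ 0 := three_ne_zero' hp5
  have hm : (-3 : ZMod p) * (3 : ZMod p)⁻¹ = -1 := by
    rw [neg_mul, mul_inv_cancel₀ h3]
  unfold s
  rw [hm, val_neg_one' hp5]
  exact (even_p_sub_one hp5).neg_one_pow

lemma s_sub_three (hp5 : 5 ≤ p) {j : ZMod p} (hj : j ≠ 0) : s p (j - 3) = -s p j := by
  have h3 : (3 : ZMod p) ≠ 0 := three_ne_zero' hp5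
  have hps : 1 < p := (Fact.out : p.Prime).one_lt
  set t : ZMod p := (3 : ZMod p)⁻¹ with ht
  have h3t : (3 : ZMod p) * t = 1 := mul_inv_cancel₀ h3
  have ht0 : t ≠ 0 := by
    intro h
    rw [h, mul_zero] at h3t
    exact one_ne_zero h3t.symm
  have hm : (j - 3) * t = j * t - 1 := by rw [sub_mul, h3t]
  have hjt : j * t ≠ 0 := mul_ne_zero hj ht0
  have hval1 : 1 ≤ (j * t).val := by
    rcases Nat.eq_zero_or_pos (j * t).val with h0 | h0
    · exact absurd ((ZMod.val_eq_zero _).mp h0) hjt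
    · exact h0
  have hvlt : (j * t).val < p := ZMod.val_lt _
  have hcast : ((j * t).val : ZMod p) = j * t := by
    have := ZMod.natCast_val (n := p) (R := ZMod p) (j * t)
    rwa [ZMod.cast_id] at this
  have hsub : j * t - 1 = (((j * t).val - 1 : ℕ) : ZMod p) := by
    push_cast [Nat.cast_sub hval1]
    rw [hcast]
  have hvv : (j * t - 1).val = (j * t).val - 1 := by
    rw [hsub, ZMod.val_natCast_of_lt (by omega)]
  unfold s
  rw [← ht, hm, hvv]
  have hpow : ((-1 : ℤ)) ^ ((j * t).val) = ((-1 : ℤ)) ^ ((j * t).val - 1) * (-1) := by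
    rw [← pow_succ]
    congr 1
    omega
  rw [hpow]
  ring


lemma key (hp5 : 5 ≤ p) (j : ZMod p) :
    c p (j - 1) + c p (j + 1) - c p j = if j = 0 then 1 else 0 := by
  have e1 : j - 1 - 1 = j - 2 := by ring
  have e2 : j - 1 - 2 = j - 3 := by ring
  have e3 : j + 1 - 1 = j := by ring
  have e4 : j + 1 - 2 = j - 1 := by ring
  unfold c
  rw [e1, e2, e3, e4]
  by_cases hj : j = 0
  · subst hj
    have h01 : (0 : ZMod p) - 3 = -3 := by ring
    rw [if_pos rfl, h01, s_neg_three hp5, s_zero]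
    rcases s_pm (p := p) ((0 : ZMod p) - 1) with ha | ha <;>
      rcases s_pm (p := p) ((0 : ZMod p) - 2) with hb | hb <;>
        rw [ha, hb] <;> norm_num
  · rw [if_neg hj, s_sub_three hp5 hj]
    rcases s_pm (p := p) j with hA | hA <;>
      rcases s_pm (p := p) (j - 1) with hB | hB <;>
        rcases s_pm (p := p) (j - 2) with hC | hC <;>
          rw [hA, hB, hC] <;> norm_num


variable {G : Type*} [Group G]

open MonoidAlgebra Finset

lemma main (hp5 : 5 ≤ p) (g : G) (hgc : g ∈ Subgroup.center G) (hord : orderOf g = p)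
    (h : ∀ u : (MonoidAlgebra ℤ G)ˣ,
      (↑u : MonoidAlgebra ℤ G) ∈ Subring.center (MonoidAlgebra ℤ G) →
        ∃ z ∈ Subgroup.center G,
          (↑u : MonoidAlgebra ℤ G) = MonoidAlgebra.of ℤ G z ∨
          (↑u : MonoidAlgebra ℤ G) = -(MonoidAlgebra.of ℤ G z)) : False := by
  classical
  haveI : Fact (1 < p) := ⟨by omega⟩
  have hgp : g ^ p = 1 := by rw [← hord]; exact pow_orderOf_eq_one g
  have hginv : g⁻¹ = g ^ (p - 1) := by
    symm
    apply eq_inv_of_mul_eq_one_left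
    rw [← pow_succ]
    have : p - 1 + 1 = p := by omega
    rw [this, hgp]
  -- powers of g indexed by ZMod p
  have hpow_mod : ∀ n : ℕ, g ^ (n % p) = g ^ n := by
    intro n
    have := pow_mod_orderOf g n
    rwa [hord] at this
  have hpow_add_one : ∀ j : ZMod p, g ^ ((j + 1).val) = g * g ^ (j.val) := by
    intro j
    rw [ZMod.val_add, ZMod.val_one, hpow_mod, pow_succ']
  have hpow_sub_one : ∀ j : ZMod p, g ^ ((j - 1).val) = g⁻¹ * g ^ (j.val) := by
    intro j
    have : j - 1 = j + (-1) := by ring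
    rw [this, ZMod.val_add, val_neg_one' hp5, hpow_mod, add_comm j.val, pow_add, ← hginv]
  -- the unit and its inverse
  set u : MonoidAlgebra ℤ G := single g 1 + single g⁻¹ 1 - single 1 1 with hu
  set v : MonoidAlgebra ℤ G := ∑ j : ZMod p, single (g ^ (j.val : ℕ)) (c p j) with hv
  -- u is central
  have hcomm : ∀ a' : G, Commute g a' := fun a' => Subgroup.mem_center_iff.mp hgc a' |>.symm
  have hcommi : ∀ a' : G, Commute g⁻¹ a' := fun a' => (hcomm a').inv_left
  have hucen : u ∈ Subring.center (MonoidAlgebra ℤ G) := by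
    rw [Subring.mem_center_iff]
    intro x
    have h1 : Commute (single g (1 : ℤ)) x := single_commute hcomm (Commute.all 1) x
    have h2 : Commute (single g⁻¹ (1 : ℤ)) x := single_commute hcommi (Commute.all 1) x
    have h3 : Commute (single (1 : G) (1 : ℤ)) x := single_commute Commute.one_left (Commute.all 1) x
    rw [hu]
    rw [sub_mul, add_mul, mul_sub, mul_add, h1.eq, h2.eq, h3.eq]
  -- u * v = 1
  have hAv : single g (1 : ℤ) * v = ∑ j : ZMod p, single (g ^ (j.val : ℕ)) (c p (j - 1)) := by
    rw [hv, Finset.mul_sum]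
    rw [← Equiv.sum_comp (Equiv.addRight (1 : ZMod p))
      (fun j => single (g ^ (j.val : ℕ)) (c p (j - 1)))]
    apply Finset.sum_congr rfl
    intro j _
    rw [single_mul_single, one_mul]
    show single (g * g ^ j.val) (c p j) = single (g ^ ((j + 1).val : ℕ)) (c p (j + 1 - 1))
    rw [hpow_add_one, add_sub_cancel_right]
  have hBv : single g⁻¹ (1 : ℤ) * v = ∑ j : ZMod p, single (g ^ (j.val : ℕ)) (c p (j + 1)) := by
    rw [hv, Finset.mul_sum]
    rw [← Equiv.sum_comp (Equiv.subRight (1 : ZMod p))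
      (fun j => single (g ^ (j.val : ℕ)) (c p (j + 1)))]
    apply Finset.sum_congr rfl
    intro j _
    rw [single_mul_single, one_mul]
    show single (g⁻¹ * g ^ j.val) (c p j) = single (g ^ ((j - 1).val : ℕ)) (c p (j - 1 + 1))
    rw [hpow_sub_one, sub_add_cancel]
  have hCv : single (1 : G) (1 : ℤ) * v = ∑ j : ZMod p, single (g ^ (j.val : ℕ)) (c p j) := by
    rw [← one_def, one_mul, hv]
  have huv : u * v = 1 := by
    rw [hu, sub_mul, add_mul, hAv, hBv, hCv]
    rw [← Finset.sum_add_distrib, ← Finset.sum_sub_distrib]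
    have : ∀ j : ZMod p,
        (single (g ^ (j.val : ℕ)) (c p (j - 1)) + single (g ^ (j.val : ℕ)) (c p (j + 1)) -
          single (g ^ (j.val : ℕ)) (c p j) : MonoidAlgebra ℤ G)
        = single (g ^ (j.val : ℕ)) (if j = 0 then 1 else 0) := by
      intro j
      rw [← single_add, ← MonoidAlgebra.single_sub, key hp5 j]
    rw [Finset.sum_congr rfl fun j _ => this j]
    rw [Finset.sum_eq_single (0 : ZMod p)]
    · rw [if_pos rfl, ZMod.val_zero, pow_zero, ← one_def]
    · intro j _ hj
      rw [if_neg hj, single_zero]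
    · intro habs
      exact absurd (Finset.mem_univ _) habs
  have hvu : v * u = 1 := by
    exact (Subring.mem_center_iff.mp hucen v).trans huv
  set U : (MonoidAlgebra ℤ G)ˣ := ⟨u, v, huv, hvu⟩ with hU
  obtain ⟨z, hzc, hcase⟩ := h U hucen
  have hg1 : g ≠ 1 := by
    intro e
    rw [e, orderOf_one] at hord
    omega
  have hginv1 : g⁻¹ ≠ 1 := by simpa [inv_eq_one] using hg1
  have hgginv : g⁻¹ ≠ g := by
    intro e
    have h2 : g ^ 2 = 1 := by
      rw [pow_two]
      nth_rewrite 2 [← e]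
      exact mul_inv_cancel g
    have h3 : orderOf g ∣ 2 := orderOf_dvd_of_pow_eq_one h2
    rw [hord] at h3
    have := Nat.le_of_dvd (by norm_num) h3
    omega
  have hUu : (↑U : MonoidAlgebra ℤ G) = u := rfl
  rw [hUu] at hcase
  rcases hcase with hc | hc
  · have hc2 : (Finsupp.single g 1 + Finsupp.single g⁻¹ 1 - Finsupp.single 1 1 : G →₀ ℤ)
        = Finsupp.single z 1 := congrArg MonoidAlgebra.coeff hc
    have hval := DFunLike.congr_fun hc2 (1 : G)
    simp only [Finsupp.sub_apply, Finsupp.add_apply,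
      Finsupp.single_apply, if_neg hg1, if_neg hginv1, if_pos rfl] at hval
    split_ifs at hval <;> omega
  · have hc2 : (Finsupp.single g 1 + Finsupp.single g⁻¹ 1 - Finsupp.single 1 1 : G →₀ ℤ)
        = -Finsupp.single z 1 := congrArg MonoidAlgebra.coeff hc
    have hval := DFunLike.congr_fun hc2 g
    simp only [Finsupp.sub_apply, Finsupp.add_apply,
      Finsupp.neg_apply, Finsupp.single_apply, if_pos rfl, if_neg hgginv,
      if_neg (Ne.symm hg1)] at hval
    split_ifs at hval <;> omega


end CutAux
end CutAux

theorem prime_eq_two_or_three_of_nilpotent_hasCut (G : Type*) [Group G] [Finite G]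
    [Group.IsNilpotent G] (h : HasCut G) (p : ℕ) (hp : p.Prime)
    (hdvd : p ∣ Nat.card G) : p = 2 ∨ p = 3 := by
  by_contra hcon
  push_neg at hcon
  obtain ⟨h2, h3⟩ := hcon
  have h4 : p ≠ 4 := by
    intro hh
    rw [hh] at hp
    norm_num at hp
  have hp5 : 5 ≤ p := by
    have := hp.two_le
    omega
  haveI : Fact p.Prime := ⟨hp⟩
  obtain ⟨g, hgc, hord⟩ := exists_central_orderOf_eq p hp hdvd
  exact CutAux.main hp5 g hgc hord h
end

section
/- If a finite 3-group G has the cut-property, then every quotient of consecutive terms of the upper central series of G has exponent 3; that is, for every index i and every x in the (i+1)-st term Z_{i+1}(G) of the upper central series, x³ lies in Z_i(G). -/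
set_option linter.unusedSectionVars false
set_option maxHeartbeats 1000000
open MonoidAlgebra


abbrev C9 := Multiplicative (ZMod 9)
abbrev R9 := MonoidAlgebra ℤ C9

noncomputable def XX : R9 := MonoidAlgebra.single (Multiplicative.ofAdd (1 : ZMod 9)) 1

lemma XX_pow (m : ℕ) : XX ^ m = MonoidAlgebra.single (Multiplicative.ofAdd (m : ZMod 9)) 1 := by
  rw [XX, MonoidAlgebra.single_pow, one_pow]
  congr 1
  rw [← ofAdd_nsmul]
  congr 1
  simp [nsmul_eq_mul]

lemma XX_pow_nine : XX ^ 9 = 1 := by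
  rw [XX_pow]
  norm_num
  rfl

noncomputable def uu : R9 := -6 - XX + 8*XX^2 + 13*XX^3 + 8*XX^4 - XX^5 - 6*XX^6 - 7*XX^7 - 7*XX^8
noncomputable def vv : R9 := -63 + 22*XX + 22*XX^2 - 63*XX^3 + 97*XX^4 - 119*XX^5 + 127*XX^6 - 119*XX^7 + 97*XX^8

lemma uu_mul_vv : uu * vv = 1 := by
  have hX : XX ^ 9 = 1 := XX_pow_nine
  rw [uu, vv]
  linear_combination (-377 + 69*XX + 658*XX^2 + 287*XX^3 + 561*XX^4 - 638*XX^5 + 154*XX^6 - 679*XX^7) * hX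



noncomputable def zeta : ℂ := Complex.exp ((2 * Real.pi / 9 : ℝ) * Complex.I)

lemma zeta_pow_nine : zeta ^ 9 = 1 := by
  have h1 : zeta ^ 9 = Complex.exp ((9:ℕ) * ((2 * Real.pi / 9 : ℝ) * Complex.I)) := by
    rw [zeta, ← Complex.exp_nat_mul]
  rw [h1]
  have h2 : ((9:ℕ):ℂ) * ((2 * Real.pi / 9 : ℝ) * Complex.I) = 2 * (Real.pi : ℂ) * Complex.I := by
    push_cast; ring
  rw [h2, Complex.exp_two_pi_mul_I]

lemma zeta_ne_one : zeta ≠ 1 := by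
  intro h
  rw [zeta] at h
  obtain ⟨n, hn⟩ := Complex.exp_eq_one_iff.mp h
  have him := congrArg Complex.im hn
  simp [Complex.mul_im, Complex.mul_re] at him
  have hpi := Real.pi_pos
  have h9 : (n:ℝ) * 9 = 1 := by
    have h2 : Real.pi * ((n:ℝ) * 9 - 1) * 2 = 0 := by nlinarith [him]
    have h3 : ((n:ℝ) * 9 - 1) = 0 := by
      rcases mul_eq_zero.mp h2 with h | h
      · rcases mul_eq_zero.mp h with h' | h'
        · exact absurd h' (ne_of_gt hpi)
        · exact h'
      · norm_num at h
    linarith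
  have : ((n * 9 : ℤ) : ℝ) = 1 := by push_cast; linarith
  have : (n * 9 : ℤ) = 1 := by exact_mod_cast this
  omega

lemma zeta_abs : ‖zeta‖ = 1 := by
  rw [zeta, Complex.norm_exp]
  simp

lemma zeta_geom : 1 + zeta + zeta^2 + zeta^3 + zeta^4 + zeta^5 + zeta^6 + zeta^7 + zeta^8 = 0 := by
  have h : (zeta - 1) * (1 + zeta + zeta^2 + zeta^3 + zeta^4 + zeta^5 + zeta^6 + zeta^7 + zeta^8) = zeta^9 - 1 := by ring
  rw [zeta_pow_nine, sub_self] at h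
  rcases mul_eq_zero.mp h with h1 | h2
  · exact absurd (sub_eq_zero.mp h1) zeta_ne_one
  · exact h2

lemma one_lt_abs_aux : 1 < ‖(1 + zeta)^6‖ := by
  have hre : (1 + zeta).re = 1 + Real.cos (2 * Real.pi / 9) := by
    rw [zeta, Complex.add_re, Complex.one_re]
    congr 1
    rw [Complex.exp_ofReal_mul_I_re]
  have hcos : 0 < Real.cos (2 * Real.pi / 9) := by
    apply Real.cos_pos_of_mem_Ioo
    constructor <;> nlinarith [Real.pi_pos]
  have h1 : (1 : ℝ) < (1 + zeta).re := by rw [hre]; linarith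
  have h2 : (1:ℝ) < ‖1 + zeta‖ := lt_of_lt_of_le h1 (Complex.re_le_norm _)
  rw [norm_pow]
  exact one_lt_pow₀ h2 (by norm_num)

-- the character
noncomputable def chi : C9 →* ℂ where
  toFun k := zeta ^ (Multiplicative.toAdd k).val
  map_one' := by
    show zeta ^ (0 : ZMod 9).val = 1
    simp
  map_mul' a b := by
    have hmod : ∀ m : ℕ, zeta ^ (m % 9) = zeta ^ m := by
      intro m
      conv_rhs => rw [← Nat.div_add_mod m 9]
      rw [pow_add, pow_mul, zeta_pow_nine, one_pow, one_mul]
    show zeta ^ (Multiplicative.toAdd (a*b)).val = _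
    have hv : (Multiplicative.toAdd (a*b)).val = ((Multiplicative.toAdd a).val + (Multiplicative.toAdd b).val) % 9 :=
      ZMod.val_add _ _
    rw [hv, hmod, pow_add]

noncomputable def Phi : R9 →ₐ[ℤ] ℂ := MonoidAlgebra.lift ℤ ℂ C9 chi

lemma Phi_single (m : C9) (c : ℤ) : Phi (MonoidAlgebra.single m c) = c * zeta ^ (Multiplicative.toAdd m).val := by
  rw [Phi, MonoidAlgebra.lift_single]
  show c • zeta ^ _ = _
  rw [zsmul_eq_mul]

lemma Phi_XX : Phi XX = zeta := by
  rw [XX, Phi_single]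
  have : (Multiplicative.toAdd (Multiplicative.ofAdd (1 : ZMod 9))).val = 1 := by
    decide
  rw [this]
  simp

lemma Phi_uu : Phi uu = (1 + zeta)^6 := by
  have h : Phi uu = -6 - zeta + 8*zeta^2 + 13*zeta^3 + 8*zeta^4 - zeta^5 - 6*zeta^6 - 7*zeta^7 - 7*zeta^8 := by
    rw [uu]
    simp only [map_sub, map_add, map_mul, map_pow, map_neg, map_ofNat, map_one, Phi_XX]
  rw [h]
  linear_combination (-7 : ℂ) * zeta_geom

lemma one_lt_Phi_uu : 1 < ‖Phi uu‖ := by rw [Phi_uu]; exact one_lt_abs_aux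



lemma zsmul_torsion_free (n : ℕ) (hn : 0 < n) (y : R9) (hy : (n:ℤ) • y = 0) : y = 0 := by
  ext c
  have := congrFun (congrArg (fun f : R9 => (f.coeff : C9 → ℤ)) hy) c
  simp only [MonoidAlgebra.coeff_smul, MonoidAlgebra.coeff_zero, Finsupp.coe_smul, Pi.smul_apply, smul_eq_mul, Finsupp.coe_zero, Pi.zero_apply] at this
  have hn' : (n:ℤ) ≠ 0 := by exact_mod_cast hn.ne'
  simpa using (mul_eq_zero.mp this).resolve_left hn'

lemma exists_pow_cong_one (n : ℕ) (hn : 0 < n) (u v : R9) (huv : u * v = 1) :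
    ∃ s : ℕ, 1 ≤ s ∧ ∃ b b' : R9,
      u ^ s = 1 + (n:ℤ) • b ∧ v ^ s = 1 + (n:ℤ) • b' ∧ b + b' + (n:ℤ) • (b * b') = 0 := by
  classical
  haveI : NeZero n := ⟨hn.ne'⟩
  let ψ : R9 → (C9 → ZMod n) := fun y c => ((y.coeff c : ℤ) : ZMod n)
  have hker : ∀ y y' : R9, ψ y = ψ y' → ∃ d : R9, y' = y + (n:ℤ) • d := by
    intro y y' hyy
    refine ⟨MonoidAlgebra.ofCoeff ((y' - y).coeff.mapRange (fun t => t / (n:ℤ)) (by simp)), ?_⟩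
    ext c
    have h0 : ((y.coeff c : ℤ) : ZMod n) = ((y'.coeff c : ℤ) : ZMod n) := congrFun hyy c
    have h1 : (((y' - y).coeff c : ℤ) : ZMod n) = 0 := by
      rw [MonoidAlgebra.coeff_sub, Finsupp.sub_apply]
      push_cast
      rw [← h0]; ring
    have hdvd : (n:ℤ) ∣ (y' - y).coeff c := (ZMod.intCast_zmod_eq_zero_iff_dvd _ _).mp h1
    have h2 : (n:ℤ) * ((y' - y).coeff c / (n:ℤ)) = (y' - y).coeff c := Int.mul_ediv_cancel' hdvd
    rw [MonoidAlgebra.coeff_add, Finsupp.add_apply, MonoidAlgebra.coeff_smul, Finsupp.smul_apply,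
      MonoidAlgebra.coeff_ofCoeff, Finsupp.mapRange_apply, smul_eq_mul, h2,
      MonoidAlgebra.coeff_sub, Finsupp.sub_apply]
    ring
  obtain ⟨a, b0, hab, heq⟩ := Finite.exists_ne_map_eq_of_infinite (fun s : ℕ => ψ (u ^ s))
  wlog hlt : a < b0 generalizing a b0
  · exact this b0 a hab.symm heq.symm (by omega)
  set s := b0 - a with hs
  have hs1 : 1 ≤ s := by omega
  obtain ⟨d, hd⟩ := hker (u ^ a) (u ^ b0) heq
  -- u^b0 = u^a + n•d  ⇒  u^s = 1 + n • (v^a * d)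
  have hbu : u ^ s = 1 + (n:ℤ) • (v ^ a * d) := by
    have hva : v ^ a * u ^ a = 1 := by rw [← mul_pow, mul_comm v u, huv, one_pow]
    have h3 : v ^ a * u ^ b0 = u ^ s := by
      rw [show b0 = a + s by omega, pow_add, ← mul_assoc, hva, one_mul]
    rw [← h3, hd, mul_add, hva, mul_smul_comm]
  set b : R9 := v ^ a * d with hb
  have hbv : v ^ s = 1 + (n:ℤ) • (-(v ^ s * b)) := by
    have h4 : v ^ s * (u ^ s) = 1 := by rw [← mul_pow, mul_comm v u, huv, one_pow]
    rw [hbu, mul_add, mul_one, mul_smul_comm] at h4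
    rw [smul_neg, ← h4]
    ring
  set b' : R9 := -(v ^ s * b) with hb'
  refine ⟨s, hs1, b, b', hbu, hbv, ?_⟩
  apply zsmul_torsion_free n hn
  have husv : (1 + (n:ℤ) • b) * (1 + (n:ℤ) • b') = 1 := by
    rw [← hbu, ← hbv, ← mul_pow, huv, one_pow]
  have hC : ∀ y : R9, (n:ℤ) • y = ((n:ℤ) : R9) * y := fun y => zsmul_eq_mul _ _
  simp only [hC] at husv ⊢
  linear_combination husv


section GroupRing
variable {G : Type*} [Group G]

noncomputable def hatN (N : Subgroup G) [Fintype N] : MonoidAlgebra ℤ G :=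
  ∑ ν : N, MonoidAlgebra.of ℤ G (ν : G)

variable {N : Subgroup G} [Fintype N]

lemma hatN_mul_of_mem {ν₀ : G} (h : ν₀ ∈ N) : hatN N * MonoidAlgebra.of ℤ G ν₀ = hatN N := by
  rw [hatN, Finset.sum_mul]
  have : ∀ ν : N, MonoidAlgebra.of ℤ G (ν : G) * MonoidAlgebra.of ℤ G ν₀
      = MonoidAlgebra.of ℤ G ((ν * ⟨ν₀, h⟩ : N) : G) := by
    intro ν; rw [← map_mul]; rfl
  rw [Finset.sum_congr rfl fun ν _ => this ν]
  exact Fintype.sum_equiv (Equiv.mulRight (⟨ν₀, h⟩ : N)) _ _ (fun ν => rfl)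

lemma of_mem_mul_hatN {ν₀ : G} (h : ν₀ ∈ N) : MonoidAlgebra.of ℤ G ν₀ * hatN N = hatN N := by
  rw [hatN, Finset.mul_sum]
  have : ∀ ν : N, MonoidAlgebra.of ℤ G ν₀ * MonoidAlgebra.of ℤ G (ν : G)
      = MonoidAlgebra.of ℤ G (((⟨ν₀, h⟩ : N) * ν : N) : G) := by
    intro ν; rw [← map_mul]; rfl
  rw [Finset.sum_congr rfl fun ν _ => this ν]
  exact Fintype.sum_equiv (Equiv.mulLeft (⟨ν₀, h⟩ : N)) _ _ (fun ν => rfl)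

lemma of_mul_hatN_comm [N.Normal] (g : G) :
    MonoidAlgebra.of ℤ G g * hatN N = hatN N * MonoidAlgebra.of ℤ G g := by
  rw [hatN, Finset.mul_sum, Finset.sum_mul]
  refine Fintype.sum_equiv ((MulAut.conjNormal g : MulAut N) : N ≃* N).toEquiv _ _ (fun ν => ?_)
  rw [← map_mul, ← map_mul]
  congr 1
  show (g:G) * ν = (g * ν * g⁻¹) * g
  group

lemma hatN_mul_hatN : hatN N * hatN N = (Fintype.card N : ℤ) • hatN N := by
  nth_rewrite 2 [hatN]
  rw [Finset.mul_sum]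
  rw [Finset.sum_congr rfl fun (ν : N) _ => hatN_mul_of_mem ν.2]
  simp [Finset.sum_const, natCast_zsmul]

lemma mem_center_of_commute_of (a : MonoidAlgebra ℤ G)
    (hc : ∀ g : G, MonoidAlgebra.of ℤ G g * a = a * MonoidAlgebra.of ℤ G g) :
    a ∈ Subring.center (MonoidAlgebra ℤ G) := by
  rw [Subring.mem_center_iff]
  intro b
  induction b using MonoidAlgebra.induction_linear with
  | zero => simp
  | add f g hf hg => rw [add_mul, mul_add, hf, hg]
  | single g c =>
    have h1 : (MonoidAlgebra.single g c : MonoidAlgebra ℤ G) = c • MonoidAlgebra.of ℤ G g := by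
      rw [MonoidAlgebra.of_apply, MonoidAlgebra.smul_single, smul_eq_mul, mul_one]
    rw [h1, smul_mul_assoc, mul_smul_comm, hc g]

end GroupRing

section EA
variable {G : Type*} [Group G] (N : Subgroup G) [Fintype N] [N.Normal] (z : G)

noncomputable def EE (k : ZMod 9) : MonoidAlgebra ℤ G :=
  hatN N * MonoidAlgebra.of ℤ G (z ^ k.val)

lemma EE_red (hz9 : z ^ 9 ∈ N) (m : ℕ) :
    hatN N * MonoidAlgebra.of ℤ G (z ^ m) = EE N z (m : ZMod 9) := by
  rw [EE]
  have hval : ((m : ZMod 9)).val = m % 9 := ZMod.val_natCast 9 m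
  rw [hval]
  conv_lhs => rw [← Nat.div_add_mod m 9]
  rw [pow_add, pow_mul, map_mul, ← mul_assoc]
  congr 1
  exact hatN_mul_of_mem (pow_mem hz9 _)

lemma EE_mul (hz9 : z ^ 9 ∈ N) (j k : ZMod 9) :
    EE N z j * EE N z k = (Fintype.card N : ℤ) • EE N z (j + k) := by
  have h1 : EE N z j * EE N z k
      = hatN N * (MonoidAlgebra.of ℤ G (z ^ j.val) * hatN N) * MonoidAlgebra.of ℤ G (z ^ k.val) := by
    rw [EE, EE]; simp only [mul_assoc]
  have h2 : ((j.val + k.val : ℕ) : ZMod 9) = j + k := by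
    push_cast [ZMod.natCast_val, ZMod.cast_id]
    rfl
  rw [h1, of_mul_hatN_comm]
  simp only [← mul_assoc]
  rw [hatN_mul_hatN]
  simp only [smul_mul_assoc]
  rw [mul_assoc, ← map_mul, ← pow_add, EE_red N z hz9, h2]

lemma EE_comm (hzc : ∀ (g : G) (m : ℕ), (z ^ m)⁻¹ * (g * z ^ m * g⁻¹) ∈ N)
    (g : G) (k : ZMod 9) :
    MonoidAlgebra.of ℤ G g * EE N z k = EE N z k * MonoidAlgebra.of ℤ G g := by
  set m := k.val with hm
  have hνN : (z ^ m)⁻¹ * (g * z ^ m * g⁻¹) ∈ N := hzc g m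
  have hgz : g * z ^ m = z ^ m * ((z ^ m)⁻¹ * (g * z ^ m * g⁻¹)) * g := by group
  have habs : hatN N * MonoidAlgebra.of ℤ G (z ^ m) * MonoidAlgebra.of ℤ G ((z ^ m)⁻¹ * (g * z ^ m * g⁻¹))
      = hatN N * MonoidAlgebra.of ℤ G (z ^ m) := by
    rw [← of_mul_hatN_comm, mul_assoc, hatN_mul_of_mem hνN, of_mul_hatN_comm]
  rw [EE, ← mul_assoc, of_mul_hatN_comm, mul_assoc, ← map_mul, hgz, map_mul, map_mul,
    ← mul_assoc, ← mul_assoc]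
  rw [habs]

noncomputable def AA (y : MonoidAlgebra ℤ (Multiplicative (ZMod 9))) : MonoidAlgebra ℤ G :=
  ∑ k : ZMod 9, (y.coeff (Multiplicative.ofAdd k)) • EE N z k

lemma AA_zero : AA N z 0 = 0 := by simp [AA]

lemma AA_add (y y' : MonoidAlgebra ℤ (Multiplicative (ZMod 9))) :
    AA N z (y + y') = AA N z y + AA N z y' := by
  rw [AA, AA, AA, ← Finset.sum_add_distrib]
  refine Finset.sum_congr rfl fun k _ => ?_
  rw [show ((y + y').coeff (Multiplicative.ofAdd k)) = y.coeff (Multiplicative.ofAdd k) + y'.coeff (Multiplicative.ofAdd k) from Finsupp.add_apply _ _ _, add_smul]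

lemma AA_smul (c : ℤ) (y : MonoidAlgebra ℤ (Multiplicative (ZMod 9))) :
    AA N z (c • y) = c • AA N z y := by
  rw [AA, AA, Finset.smul_sum]
  refine Finset.sum_congr rfl fun k _ => ?_
  rw [show ((c • y).coeff (Multiplicative.ofAdd k)) = c • (y.coeff (Multiplicative.ofAdd k)) from Finsupp.smul_apply _ _ _,
    smul_eq_mul, mul_smul]

lemma AA_single (a : Multiplicative (ZMod 9)) (c : ℤ) :
    AA N z (MonoidAlgebra.single a c) = c • EE N z (Multiplicative.toAdd a) := by
  rw [AA]
  rw [Finset.sum_eq_single (Multiplicative.toAdd a)]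
  · simp [Finsupp.single_apply]
  · intro k _ hk
    have : ¬ (a = Multiplicative.ofAdd k) := by
      intro hc; apply hk; rw [hc]; rfl
    simp [Finsupp.single_apply, this]
  · intro hk; exact absurd (Finset.mem_univ _) hk

lemma AA_mul (hz9 : z ^ 9 ∈ N) (y y' : MonoidAlgebra ℤ (Multiplicative (ZMod 9))) :
    AA N z y * AA N z y' = (Fintype.card N : ℤ) • AA N z (y * y') := by
  induction y using MonoidAlgebra.induction_linear with
  | zero => simp [AA_zero]
  | add f g hf hg => rw [AA_add, add_mul, hf, hg, add_mul, AA_add, smul_add]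
  | single a c =>
    induction y' using MonoidAlgebra.induction_linear with
    | zero => simp [AA_zero]
    | add f g hf hg => rw [AA_add, mul_add, hf, hg, mul_add, AA_add, smul_add]
    | single a' c' =>
      rw [AA_single, AA_single, MonoidAlgebra.single_mul_single, AA_single]
      rw [smul_mul_assoc, mul_smul_comm, EE_mul N z hz9]
      rw [smul_smul, smul_smul, smul_smul]
      have htoadd : Multiplicative.toAdd (a * a') = Multiplicative.toAdd a + Multiplicative.toAdd a' := rfl
      rw [htoadd]
      congr 1
      ring

lemma AA_comm (hzc : ∀ (g : G) (m : ℕ), (z ^ m)⁻¹ * (g * z ^ m * g⁻¹) ∈ N)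
    (g : G) (y : MonoidAlgebra ℤ (Multiplicative (ZMod 9))) :
    MonoidAlgebra.of ℤ G g * AA N z y = AA N z y * MonoidAlgebra.of ℤ G g := by
  rw [AA, Finset.mul_sum, Finset.sum_mul]
  refine Finset.sum_congr rfl fun k _ => ?_
  rw [mul_smul_comm, smul_mul_assoc, EE_comm N z hzc]

end EA


section PI
variable {G : Type*} [Group G] (N : Subgroup G) [Fintype N] [N.Normal] (z : G)
variable {Q : Type*} [Group Q] (f : G →* Q)

noncomputable def piH : MonoidAlgebra ℤ G →+* MonoidAlgebra ℤ Q :=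
  MonoidAlgebra.mapDomainRingHom ℤ f

lemma piH_of (g : G) : piH f (MonoidAlgebra.of ℤ G g) = MonoidAlgebra.single (f g) 1 := by
  simp [piH, MonoidAlgebra.mapDomainRingHom, MonoidAlgebra.of_apply, Finsupp.mapDomain_single]

lemma piH_hatN (hf : ∀ ν : N, f ν = 1) :
    piH f (hatN N) = (Fintype.card N : ℤ) • 1 := by
  rw [hatN, map_sum]
  have h1 : ∀ ν : N, piH f (MonoidAlgebra.of ℤ G (ν : G)) = MonoidAlgebra.single (1:Q) (1:ℤ) := by
    intro ν; rw [piH_of, hf ν]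
  rw [Finset.sum_congr rfl fun ν _ => h1 ν, Finset.sum_const, Finset.card_univ]
  rw [show (MonoidAlgebra.single (1:Q) (1:ℤ)) = (1 : MonoidAlgebra ℤ Q) from (MonoidAlgebra.one_def).symm]
  rw [natCast_zsmul]

lemma piH_EE (hf : ∀ ν : N, f ν = 1) (k : ZMod 9) :
    piH f (EE N z k) = (Fintype.card N : ℤ) • MonoidAlgebra.single (f (z ^ k.val)) 1 := by
  rw [EE, map_mul, piH_hatN N f hf, piH_of, smul_mul_assoc, one_mul]

lemma piH_AA (hf : ∀ ν : N, f ν = 1) (y : MonoidAlgebra ℤ (Multiplicative (ZMod 9))) :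
    piH f (AA N z y) = ∑ k : ZMod 9,
      ((Fintype.card N : ℤ) * y.coeff (Multiplicative.ofAdd k)) • MonoidAlgebra.single (f (z ^ k.val)) 1 := by
  rw [AA, map_sum]
  refine Finset.sum_congr rfl fun k _ => ?_
  rw [map_zsmul, piH_EE N z f hf, smul_smul, mul_comm]

end PI

theorem upperCentralSeries_exponent_three_of_hasCut (G : Type*) [Group G] [Finite G]
    (hp : IsPGroup 3 G) (h : HasCut G) (i : ℕ) (x : G)
    (hx : x ∈ upperCentralSeries G (i + 1)) : x ^ 3 ∈ upperCentralSeries G i := by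
  classical
  by_contra hx3
  set N := upperCentralSeries G i with hNdef
  haveI : N.Normal := Subgroup.normal_of_characteristic (Subgroup.upperCentralSeries G i)
  haveI : Fintype N := Fintype.ofFinite N
  let mk : G →* G ⧸ N := QuotientGroup.mk' N
  have hmk1 : ∀ g : G, mk g = 1 ↔ g ∈ N := fun g => QuotientGroup.eq_one_iff g
  -- x is central mod N
  have hxc : ∀ q : G ⧸ N, q * mk x = mk x * q := by
    intro q
    refine QuotientGroup.induction_on q fun y => ?_
    have h1 : x * y * x⁻¹ * y⁻¹ ∈ N := mem_upperCentralSeries_succ_iff.mp hx y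
    have h2 : mk x * mk y * (mk x)⁻¹ * (mk y)⁻¹ = 1 := by
      simpa [map_mul, map_inv] using (hmk1 _).mpr h1
    exact (commutatorElement_eq_one_iff_mul_comm.mp h2).symm
  -- order considerations
  have hQp : IsPGroup 3 (G ⧸ N) := hp.to_quotient N
  obtain ⟨kk, hkk⟩ := hQp (mk x)
  obtain ⟨r, hr⟩ : ∃ r, orderOf (mk x) = 3 ^ r := by
    rcases (Nat.dvd_prime_pow (by norm_num)).mp (orderOf_dvd_of_pow_eq_one hkk) with ⟨r, _, hr⟩
    exact ⟨r, hr⟩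
  have hx3Q : (mk x) ^ 3 ≠ 1 := by
    intro hc
    apply hx3
    rw [show x ^ 3 ∈ upperCentralSeries G i ↔ x ^ 3 ∈ N from Iff.rfl, ← hmk1]
    rw [map_pow]
    exact hc
  have hr2 : 2 ≤ r := by
    by_contra hr2
    push_neg at hr2
    have hdvd : orderOf (mk x) ∣ 3 := by
      rw [hr]
      calc (3:ℕ) ^ r ∣ 3 ^ 1 := pow_dvd_pow 3 (by omega)
        _ = 3 := pow_one 3
    exact hx3Q (orderOf_dvd_iff_pow_eq_one.mp hdvd)
  obtain ⟨r', rfl⟩ : ∃ r', r = r' + 2 := ⟨r - 2, by omega⟩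
  set z := x ^ (3 ^ r') with hzdef
  have hzbar : mk z = (mk x) ^ (3 ^ r') := by rw [hzdef, map_pow]
  have hordz : orderOf (mk z) = 9 := by
    rw [hzbar, orderOf_pow, hr]
    have hgcd : Nat.gcd (3 ^ (r' + 2)) (3 ^ r') = 3 ^ r' :=
      Nat.gcd_eq_right (pow_dvd_pow 3 (by omega))
    rw [hgcd, pow_add]
    rw [Nat.mul_div_cancel_left _ (Nat.pow_pos (n := r') (by norm_num : 0 < 3))]
    norm_num
  have hz9 : z ^ 9 ∈ N := by
    rw [← hmk1, map_pow, ← hordz]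
    exact pow_orderOf_eq_one (mk z)
  have hzcomm : ∀ q : G ⧸ N, Commute q (mk z) := by
    intro q
    rw [hzbar]
    have hcxq : Commute q (mk x) := hxc q
    exact hcxq.pow_right _
  have hzc : ∀ (g : G) (m : ℕ), (z ^ m)⁻¹ * (g * z ^ m * g⁻¹) ∈ N := by
    intro g m
    rw [← hmk1]
    have hcq : mk g * (mk z) ^ m = (mk z) ^ m * mk g := ((hzcomm (mk g)).pow_right m).eq
    simp only [map_mul, map_inv, map_pow]
    rw [hcq]
    group
  -- the unit construction
  set nn : ℕ := Fintype.card N with hnn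
  have hnn0 : 0 < nn := Fintype.card_pos
  obtain ⟨s, hs1, b, b', hbu, hbv, hrel⟩ := exists_pow_cong_one nn hnn0 uu vv uu_mul_vv
  set w : MonoidAlgebra ℤ G := 1 + AA N z b with hwdef
  set w' : MonoidAlgebra ℤ G := 1 + AA N z b' with hw'def
  have hAzero : AA N z b + AA N z b' + (nn:ℤ) • AA N z (b * b') = 0 := by
    rw [← AA_smul, ← AA_add, ← AA_add, hrel, AA_zero]
  have hAzero' : AA N z b' + AA N z b + (nn:ℤ) • AA N z (b' * b) = 0 := by
    rw [← AA_smul, ← AA_add, ← AA_add, mul_comm b' b,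
      show b' + b + (nn:ℤ) • (b * b') = b + b' + (nn:ℤ) • (b * b') by ring, hrel, AA_zero]
  have hPQ : AA N z b * AA N z b' = (nn:ℤ) • AA N z (b * b') := AA_mul N z hz9 b b'
  have hQP : AA N z b' * AA N z b = (nn:ℤ) • AA N z (b' * b) := AA_mul N z hz9 b' b
  have hmulww' : w * w' = 1 := by
    rw [hwdef, hw'def]
    have expand : (1 + AA N z b) * (1 + AA N z b')
        = 1 + (AA N z b + AA N z b' + AA N z b * AA N z b') := by noncomm_ring
    rw [expand, hPQ, hAzero, add_zero]
  have hmulw'w : w' * w = 1 := by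
    rw [hwdef, hw'def]
    have expand : (1 + AA N z b') * (1 + AA N z b)
        = 1 + (AA N z b' + AA N z b + AA N z b' * AA N z b) := by noncomm_ring
    rw [expand, hQP, hAzero', add_zero]
  have hcent : w ∈ Subring.center (MonoidAlgebra ℤ G) := by
    apply mem_center_of_commute_of
    intro g
    rw [hwdef, mul_add, add_mul, mul_one, one_mul, AA_comm N z hzc]
  let W : (MonoidAlgebra ℤ G)ˣ := ⟨w, w', hmulww', hmulw'w⟩
  obtain ⟨g, hgZ, hcase⟩ := h W hcent
  obtain ⟨ε, hε, hweq⟩ : ∃ ε : ℤ, (ε = 1 ∨ ε = -1) ∧ w = ε • MonoidAlgebra.of ℤ G g := by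
    rcases hcase with hc | hc
    · exact ⟨1, Or.inl rfl, by simpa using hc⟩
    · exact ⟨-1, Or.inr rfl, by rw [show ((W : MonoidAlgebra ℤ G)) = w from rfl] at hc; rw [hc]; simp⟩
  -- push to the quotient
  have hf : ∀ ν : N, mk (ν : G) = 1 := fun ν => (hmk1 _).mpr ν.2
  have hπw : piH mk w = MonoidAlgebra.single (1 : G ⧸ N) (1:ℤ)
      + ∑ k : ZMod 9, ((nn:ℤ) * b.coeff (Multiplicative.ofAdd k)) • MonoidAlgebra.single ((mk z) ^ (k.val)) 1 := by
    rw [hwdef, map_add, map_one, piH_AA N z mk hf]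
    have hsum : ∀ k : ZMod 9, mk (z ^ k.val) = (mk z) ^ (k.val) := fun k => map_pow mk z k.val
    simp only [hsum, MonoidAlgebra.one_def]
    rfl
  have hπweq : piH mk w = ε • MonoidAlgebra.single (mk g) (1:ℤ) := by
    rw [hweq, map_zsmul, piH_of]
  -- injectivity of k ↦ (mk z)^(k.val)
  have hinj : ∀ k1 k2 : ZMod 9, (mk z) ^ (k1.val) = (mk z) ^ (k2.val) → k1 = k2 := by
    intro k1 k2 hk
    have hv : k1.val = k2.val := by
      apply pow_injOn_Iio_orderOf (x := mk z) <;>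
        simp only [Set.mem_Iio, hordz]
      · exact ZMod.val_lt k1
      · exact ZMod.val_lt k2
      · exact hk
    have := congrArg (Nat.cast : ℕ → ZMod 9) hv
    simpa [ZMod.natCast_val, ZMod.cast_id] using this
  have hone : ((mk z) ^ ((0 : ZMod 9)).val) = 1 := by norm_num
  -- coefficient computation
  have hcoef : ∀ k : ZMod 9, (piH mk w).coeff ((mk z) ^ (k.val)) = (uu ^ s).coeff (Multiplicative.ofAdd k) := by
    intro k
    rw [hπw, hbu]
    rw [MonoidAlgebra.coeff_add, Finsupp.add_apply, MonoidAlgebra.coeff_sum, Finsupp.finset_sum_apply]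
    have hterm : ∀ k' : ZMod 9,
        (((nn:ℤ) * b.coeff (Multiplicative.ofAdd k')) • MonoidAlgebra.single ((mk z) ^ (k'.val)) (1:ℤ)).coeff ((mk z) ^ (k.val))
        = if k' = k then (nn:ℤ) * b.coeff (Multiplicative.ofAdd k) else 0 := by
      intro k'
      rw [MonoidAlgebra.coeff_smul, Finsupp.smul_apply, MonoidAlgebra.coeff_single, Finsupp.single_apply]
      by_cases hkk' : k' = k
      · subst hkk'; simp
      · have : ¬ ((mk z) ^ (k'.val) = (mk z) ^ (k.val)) := fun hc => hkk' (hinj _ _ hc)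
        simp [this, hkk']
    rw [Finset.sum_congr rfl fun k' _ => hterm k']
    rw [Finset.sum_ite_eq' Finset.univ k fun _ => (nn:ℤ) * b.coeff (Multiplicative.ofAdd k)]
    simp only [Finset.mem_univ, if_true]
    -- LHS: single 1 1 (mk z ^ k.val) + nn * b k ; RHS : (1 + nn•b)(ofAdd k)
    rw [MonoidAlgebra.coeff_add, Finsupp.add_apply, MonoidAlgebra.coeff_smul, Finsupp.smul_apply, smul_eq_mul]
    rw [MonoidAlgebra.one_def, MonoidAlgebra.coeff_single, MonoidAlgebra.coeff_single, Finsupp.single_apply, Finsupp.single_apply]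
    congr 1
    by_cases hk0 : k = 0
    · subst hk0
      rw [if_pos hone.symm,
        if_pos (show (1 : Multiplicative (ZMod 9)) = Multiplicative.ofAdd 0 from rfl)]
    · have h1 : ¬ ((1 : G ⧸ N) = (mk z) ^ (k.val)) := by
        intro hc
        exact hk0 (hinj 0 k (by rw [← hc, hone])).symm
      have h2 : ¬ ((1 : Multiplicative (ZMod 9)) = Multiplicative.ofAdd k) := by
        intro hc
        apply hk0
        have := congrArg Multiplicative.toAdd hc
        simpa using this.symm
      rw [if_neg h1, if_neg h2]
  have houtside : ∀ q : G ⧸ N, (∀ k : ZMod 9, q ≠ (mk z) ^ (k.val)) → (piH mk w).coeff q = 0 := by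
    intro q hq
    rw [hπw, MonoidAlgebra.coeff_add, Finsupp.add_apply, MonoidAlgebra.coeff_sum, Finsupp.finset_sum_apply]
    have h1 : (MonoidAlgebra.single (1 : G ⧸ N) (1:ℤ)).coeff q = 0 := by
      rw [MonoidAlgebra.coeff_single, Finsupp.single_apply, if_neg]
      intro hc
      exact hq 0 (by rw [← hc, hone])
    rw [h1]
    rw [Finset.sum_congr rfl fun k _ => ?_, Finset.sum_const_zero, add_zero]
    rw [MonoidAlgebra.coeff_smul, Finsupp.smul_apply, MonoidAlgebra.coeff_single, Finsupp.single_apply, if_neg fun hc => hq k hc.symm, smul_zero]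
  -- case analysis on mk g
  by_cases hcase9 : ∃ k0 : ZMod 9, mk g = (mk z) ^ (k0.val)
  · obtain ⟨k0, hk0⟩ := hcase9
    have husε : uu ^ s = ε • MonoidAlgebra.single (Multiplicative.ofAdd k0) (1:ℤ) := by
      ext c
      have hc' : c = Multiplicative.ofAdd (Multiplicative.toAdd c) := rfl
      rw [hc', ← hcoef (Multiplicative.toAdd c), hπweq]
      rw [MonoidAlgebra.coeff_smul, Finsupp.smul_apply, MonoidAlgebra.coeff_smul, Finsupp.smul_apply,
        MonoidAlgebra.coeff_single, Finsupp.single_apply, MonoidAlgebra.coeff_single, Finsupp.single_apply, hk0]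
      congr 1
      by_cases hcc : k0 = Multiplicative.toAdd c
      · rw [if_pos (by rw [hcc]), if_pos (by rw [hcc])]
      · rw [if_neg fun hc2 => hcc (hinj _ _ hc2), if_neg]
        intro hc2
        apply hcc
        have := congrArg Multiplicative.toAdd hc2
        simpa using this
    -- apply Phi and take absolute values
    have habs1 : ‖Phi (uu ^ s)‖ = 1 := by
      rw [husε, map_zsmul, Phi_single, zsmul_eq_mul]
      push_cast
      rw [norm_mul, norm_mul]
      rw [Complex.norm_intCast]
      rcases hε with hε | hε <;> rw [hε] <;>
        simp [norm_pow, zeta_abs]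
    have habs2 : 1 < ‖Phi (uu ^ s)‖ := by
      rw [map_pow, norm_pow]
      exact one_lt_pow₀ one_lt_Phi_uu (by omega)
    exact absurd habs1 (ne_of_gt habs2)
  · push_neg at hcase9
    have h0 : (piH mk w).coeff (mk g) = 0 := houtside (mk g) hcase9
    rw [hπweq, MonoidAlgebra.coeff_smul, Finsupp.smul_apply, MonoidAlgebra.coeff_single, Finsupp.single_apply, if_pos rfl, smul_eq_mul, mul_one] at h0
    rcases hε with hε | hε <;> rw [hε] at h0 <;> norm_num at h0
end

section
/- For each n ∈ {3, 4, 6}, the dihedral group of order 2n has the cut-property. -/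
set_option linter.unusedSectionVars false


open DihedralGroup Finset

instance monoidAlgebraCoeFun {R G : Type*} [Semiring R] :
    CoeFun (MonoidAlgebra R G) (fun _ => G → R) := ⟨fun f => f.coeff⟩

section Aux

variable {G : Type*} [Group G] [Fintype G] [DecidableEq G]

lemma sumsingle (f : MonoidAlgebra ℤ G) : f = ∑ a : G, MonoidAlgebra.single a (f a) := by
  ext b
  rw [MonoidAlgebra.coeff_sum, Finset.sum_apply']
  simp [Finsupp.single_apply, MonoidAlgebra.coeff_single]

lemma mulcoeff (f g : MonoidAlgebra ℤ G) (x : G) :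
    (f * g) x = ∑ a : G, f a * g (a⁻¹ * x) := by
  conv_lhs => rw [sumsingle f, Finset.sum_mul]
  rw [MonoidAlgebra.coeff_sum, Finset.sum_apply']
  exact Finset.sum_congr rfl fun a _ => by rw [MonoidAlgebra.single_mul_apply]

omit [Fintype G] [DecidableEq G] in
lemma central_conj (u : MonoidAlgebra ℤ G) (hu : u ∈ Subring.center (MonoidAlgebra ℤ G))
    (g k : G) : u (g * k * g⁻¹) = u k := by
  have h := (Subring.mem_center_iff.mp hu) (MonoidAlgebra.single g 1)
  have h2 := congrArg (fun f : MonoidAlgebra ℤ G => f (g * k)) h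
  simp only [MonoidAlgebra.single_mul_apply, MonoidAlgebra.mul_single_apply, one_mul, mul_one,
    inv_mul_cancel_left] at h2
  rw [← h2]

omit [Fintype G] [DecidableEq G] in
lemma inv_central (u : (MonoidAlgebra ℤ G)ˣ)
    (hu : (↑u : MonoidAlgebra ℤ G) ∈ Subring.center (MonoidAlgebra ℤ G)) :
    (↑u⁻¹ : MonoidAlgebra ℤ G) ∈ Subring.center (MonoidAlgebra ℤ G) := by
  rw [Subring.mem_center_iff] at hu ⊢
  intro w
  have h := congrArg (fun t => (↑u⁻¹ : MonoidAlgebra ℤ G) * t * (↑u⁻¹ : MonoidAlgebra ℤ G)) (hu w)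
  simpa [mul_assoc, Units.inv_mul_cancel_left, Units.mul_inv_cancel_left,
    Units.mul_inv, Units.inv_mul] using h.symm

def dEquiv (n : ℕ) : (ZMod n) ⊕ (ZMod n) ≃ DihedralGroup n where
  toFun i := match i with
    | Sum.inl j => r j
    | Sum.inr j => sr j
  invFun i := match i with
    | r j => Sum.inl j
    | sr j => Sum.inr j
  left_inv := by rintro (x | x) <;> rfl
  right_inv := by rintro (x | x) <;> rfl

lemma sum_d3 {M : Type*} [AddCommMonoid M] (F : DihedralGroup 3 → M) :
    ∑ g : DihedralGroup 3, F g =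
      F (r 0) + F (r 1) + F (r 2) + (F (sr 0) + F (sr 1) + F (sr 2)) := by
  rw [← Equiv.sum_comp (dEquiv 3) F, Fintype.sum_sum_type]
  show (∑ i : Fin 3, F (r i)) + (∑ i : Fin 3, F (sr i)) = _
  rw [Fin.sum_univ_three, Fin.sum_univ_three]
  rfl

lemma sum_d4 {M : Type*} [AddCommMonoid M] (F : DihedralGroup 4 → M) :
    ∑ g : DihedralGroup 4, F g =
      F (r 0) + F (r 1) + F (r 2) + F (r 3) + (F (sr 0) + F (sr 1) + F (sr 2) + F (sr 3)) := by
  rw [← Equiv.sum_comp (dEquiv 4) F, Fintype.sum_sum_type]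
  show (∑ i : Fin 4, F (r i)) + (∑ i : Fin 4, F (sr i)) = _
  rw [Fin.sum_univ_four, Fin.sum_univ_four]
  rfl

lemma sum_d6 {M : Type*} [AddCommMonoid M] (F : DihedralGroup 6 → M) :
    ∑ g : DihedralGroup 6, F g =
      F (r 0) + F (r 1) + F (r 2) + F (r 3) + F (r 4) + F (r 5) +
        (F (sr 0) + F (sr 1) + F (sr 2) + F (sr 3) + F (sr 4) + F (sr 5)) := by
  rw [← Equiv.sum_comp (dEquiv 6) F, Fintype.sum_sum_type]
  show (∑ i : Fin 6, F (r i)) + (∑ i : Fin 6, F (sr i)) = _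
  rw [Fin.sum_univ_six, Fin.sum_univ_six]
  rfl

end Aux

lemma solve3 (a0 a1 a2 : ℤ)
    (s0 : a0 + 2 * a1 + 3 * a2 = 1 ∨ a0 + 2 * a1 + 3 * a2 = -1)
    (s1 : a0 + 2 * a1 - 3 * a2 = 1 ∨ a0 + 2 * a1 - 3 * a2 = -1)
    (s2 : a0 - a1 = 1 ∨ a0 - a1 = -1) :
    (a0 = 1 ∧ a1 = 0 ∧ a2 = 0) ∨
    (a0 = -1 ∧ a1 = 0 ∧ a2 = 0) := by
  rcases s0 with h0|h0 <;> rcases s1 with h1|h1 <;> rcases s2 with h2|h2 <;> omega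

set_option maxHeartbeats 2000000 in
lemma cutD3 : HasCut (DihedralGroup 3) := by
  intro u hu
  set U : MonoidAlgebra ℤ (DihedralGroup 3) := (↑u : MonoidAlgebra ℤ (DihedralGroup 3)) with hUdef
  set V : MonoidAlgebra ℤ (DihedralGroup 3) := (↑u⁻¹ : MonoidAlgebra ℤ (DihedralGroup 3)) with hVdef
  have hv : V ∈ Subring.center _ := inv_central u hu
  have hUV : U * V = 1 := by rw [hUdef, hVdef]; exact Units.mul_inv u
  have cU1 : U (r 2) = U (r 1) := by
    have h := central_conj U hu (sr 0) (r 1)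
    rw [show (sr 0 : DihedralGroup 3) * r 1 * (sr 0)⁻¹ = r 2 from by decide] at h
    exact h
  have cV1 : V (r 2) = V (r 1) := by
    have h := central_conj V hv (sr 0) (r 1)
    rw [show (sr 0 : DihedralGroup 3) * r 1 * (sr 0)⁻¹ = r 2 from by decide] at h
    exact h
  have cU2 : U (sr 1) = U (sr 0) := by
    have h := central_conj U hu (r 1) (sr 0)
    rw [show (r 1 : DihedralGroup 3) * sr 0 * (r 1)⁻¹ = sr 1 from by decide] at h
    exact h
  have cV2 : V (sr 1) = V (sr 0) := by
    have h := central_conj V hv (r 1) (sr 0)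
    rw [show (r 1 : DihedralGroup 3) * sr 0 * (r 1)⁻¹ = sr 1 from by decide] at h
    exact h
  have cU3 : U (sr 2) = U (sr 0) := by
    have h := central_conj U hu (r 2) (sr 0)
    rw [show (r 2 : DihedralGroup 3) * sr 0 * (r 2)⁻¹ = sr 2 from by decide] at h
    exact h
  have cV3 : V (sr 2) = V (sr 0) := by
    have h := central_conj V hv (r 2) (sr 0)
    rw [show (r 2 : DihedralGroup 3) * sr 0 * (r 2)⁻¹ = sr 2 from by decide] at h
    exact h
  have E0 : U (r 0) * V (r 0) + U (r 1) * V (r 1) + U (r 1) * V (r 1) + (U (sr 0) * V (sr 0) + U (sr 0) * V (sr 0) + U (sr 0) * V (sr 0)) = 1 := by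
    have h := mulcoeff U V (r 0)
    rw [hUV, sum_d3] at h
    rw [show ((r 0 : DihedralGroup 3))⁻¹ * r 0 = r 0 from by decide, show ((r 1 : DihedralGroup 3))⁻¹ * r 0 = r 2 from by decide, show ((r 2 : DihedralGroup 3))⁻¹ * r 0 = r 1 from by decide, show ((sr 0 : DihedralGroup 3))⁻¹ * r 0 = sr 0 from by decide, show ((sr 1 : DihedralGroup 3))⁻¹ * r 0 = sr 1 from by decide, show ((sr 2 : DihedralGroup 3))⁻¹ * r 0 = sr 2 from by decide] at h
    rw [cV1, cU1, cU2, cV2, cU3, cV3] at h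
    rw [show (1 : MonoidAlgebra ℤ (DihedralGroup 3)) (r 0) = 1 from by rw [MonoidAlgebra.one_def]; exact Finsupp.single_eq_same] at h
    linarith [h]
  have E1 : U (r 0) * V (r 1) + U (r 1) * V (r 0) + U (r 1) * V (r 1) + (U (sr 0) * V (sr 0) + U (sr 0) * V (sr 0) + U (sr 0) * V (sr 0)) = 0 := by
    have h := mulcoeff U V (r 1)
    rw [hUV, sum_d3] at h
    rw [show ((r 0 : DihedralGroup 3))⁻¹ * r 1 = r 1 from by decide, show ((r 1 : DihedralGroup 3))⁻¹ * r 1 = r 0 from by decide, show ((r 2 : DihedralGroup 3))⁻¹ * r 1 = r 2 from by decide, show ((sr 0 : DihedralGroup 3))⁻¹ * r 1 = sr 1 from by decide, show ((sr 1 : DihedralGroup 3))⁻¹ * r 1 = sr 2 from by decide, show ((sr 2 : DihedralGroup 3))⁻¹ * r 1 = sr 0 from by decide] at h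
    rw [cU1, cV1, cV2, cU2, cV3, cU3] at h
    rw [show (1 : MonoidAlgebra ℤ (DihedralGroup 3)) (r 1) = 0 from by rw [MonoidAlgebra.one_def]; exact Finsupp.single_eq_of_ne (by decide)] at h
    linarith [h]
  have E2 : U (r 0) * V (sr 0) + U (r 1) * V (sr 0) + U (r 1) * V (sr 0) + (U (sr 0) * V (r 0) + U (sr 0) * V (r 1) + U (sr 0) * V (r 1)) = 0 := by
    have h := mulcoeff U V (sr 0)
    rw [hUV, sum_d3] at h
    rw [show ((r 0 : DihedralGroup 3))⁻¹ * sr 0 = sr 0 from by decide, show ((r 1 : DihedralGroup 3))⁻¹ * sr 0 = sr 1 from by decide, show ((r 2 : DihedralGroup 3))⁻¹ * sr 0 = sr 2 from by decide, show ((sr 0 : DihedralGroup 3))⁻¹ * sr 0 = r 0 from by decide, show ((sr 1 : DihedralGroup 3))⁻¹ * sr 0 = r 2 from by decide, show ((sr 2 : DihedralGroup 3))⁻¹ * sr 0 = r 1 from by decide] at h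
    rw [cV2, cU1, cV3, cU2, cV1, cU3] at h
    rw [show (1 : MonoidAlgebra ℤ (DihedralGroup 3)) (sr 0) = 0 from by rw [MonoidAlgebra.one_def]; exact Finsupp.single_eq_of_ne (by decide)] at h
    linarith [h]
  have f0 : (U (r 0) + 2 * U (r 1) + 3 * U (sr 0)) * (V (r 0) + 2 * V (r 1) + 3 * V (sr 0)) = 1 := by
    linear_combination E0 + 2 * E1 + 3 * E2
  have s0 := Int.isUnit_iff.mp (IsUnit.of_mul_eq_one _ f0)
  have f1 : (U (r 0) + 2 * U (r 1) - 3 * U (sr 0)) * (V (r 0) + 2 * V (r 1) - 3 * V (sr 0)) = 1 := by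
    linear_combination E0 + 2 * E1 - 3 * E2
  have s1 := Int.isUnit_iff.mp (IsUnit.of_mul_eq_one _ f1)
  have f2 : (U (r 0) - U (r 1)) * (V (r 0) - V (r 1)) = 1 := by
    linear_combination E0 - E1
  have s2 := Int.isUnit_iff.mp (IsUnit.of_mul_eq_one _ f2)
  have hval := solve3 (U (r 0)) (U (r 1)) (U (sr 0)) s0 s1 s2
  have hrec : U = MonoidAlgebra.single (r 0) (U (r 0)) + MonoidAlgebra.single (r 1) (U (r 1)) + MonoidAlgebra.single (r 2) (U (r 2)) + (MonoidAlgebra.single (sr 0) (U (sr 0)) + MonoidAlgebra.single (sr 1) (U (sr 1)) + MonoidAlgebra.single (sr 2) (U (sr 2))) := by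
    conv_lhs => rw [sumsingle U]
    exact sum_d3 _
  rw [cU1, cU2, cU3] at hrec
  rcases hval with ⟨v0, v1, v2⟩ | ⟨v0, v1, v2⟩
  · -- case r 0 1
    refine ⟨(1 : DihedralGroup 3), Subgroup.one_mem _, Or.inl ?_⟩
    rw [hrec, v0, v1, v2]
    simp [MonoidAlgebra.of_apply, DihedralGroup.one_def, -DihedralGroup.r_zero]
  · -- case r 0 -1
    refine ⟨(1 : DihedralGroup 3), Subgroup.one_mem _, Or.inr ?_⟩
    rw [hrec, v0, v1, v2]
    simp [MonoidAlgebra.of_apply, DihedralGroup.one_def, -DihedralGroup.r_zero]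

lemma solve4 (a0 a1 a2 a3 a4 : ℤ)
    (s0 : a0 + 2 * a1 + a2 + 2 * a3 + 2 * a4 = 1 ∨ a0 + 2 * a1 + a2 + 2 * a3 + 2 * a4 = -1)
    (s1 : a0 + 2 * a1 + a2 - 2 * a3 - 2 * a4 = 1 ∨ a0 + 2 * a1 + a2 - 2 * a3 - 2 * a4 = -1)
    (s2 : a0 - 2 * a1 + a2 + 2 * a3 - 2 * a4 = 1 ∨ a0 - 2 * a1 + a2 + 2 * a3 - 2 * a4 = -1)
    (s3 : a0 - 2 * a1 + a2 - 2 * a3 + 2 * a4 = 1 ∨ a0 - 2 * a1 + a2 - 2 * a3 + 2 * a4 = -1)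
    (s4 : a0 - a2 = 1 ∨ a0 - a2 = -1) :
    (a0 = 1 ∧ a1 = 0 ∧ a2 = 0 ∧ a3 = 0 ∧ a4 = 0) ∨
    (a0 = -1 ∧ a1 = 0 ∧ a2 = 0 ∧ a3 = 0 ∧ a4 = 0) ∨
    (a0 = 0 ∧ a1 = 0 ∧ a2 = 1 ∧ a3 = 0 ∧ a4 = 0) ∨
    (a0 = 0 ∧ a1 = 0 ∧ a2 = -1 ∧ a3 = 0 ∧ a4 = 0) := by
  have hsr : a3 = 0 ∧ a4 = 0 := by
    clear s4
    rcases s0 with h0|h0 <;> rcases s1 with h1|h1 <;> rcases s2 with h2|h2 <;> rcases s3 with h3|h3 <;> omega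
  obtain ⟨e1, e2⟩ := hsr
  clear s1 s3
  rcases s0 with h0|h0 <;> rcases s2 with h2|h2 <;> rcases s4 with h4|h4 <;> omega

set_option maxHeartbeats 2000000 in
lemma cutD4 : HasCut (DihedralGroup 4) := by
  intro u hu
  set U : MonoidAlgebra ℤ (DihedralGroup 4) := (↑u : MonoidAlgebra ℤ (DihedralGroup 4)) with hUdef
  set V : MonoidAlgebra ℤ (DihedralGroup 4) := (↑u⁻¹ : MonoidAlgebra ℤ (DihedralGroup 4)) with hVdef
  have hv : V ∈ Subring.center _ := inv_central u hu
  have hUV : U * V = 1 := by rw [hUdef, hVdef]; exact Units.mul_inv u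
  have cU1 : U (r 3) = U (r 1) := by
    have h := central_conj U hu (sr 0) (r 1)
    rw [show (sr 0 : DihedralGroup 4) * r 1 * (sr 0)⁻¹ = r 3 from by decide] at h
    exact h
  have cV1 : V (r 3) = V (r 1) := by
    have h := central_conj V hv (sr 0) (r 1)
    rw [show (sr 0 : DihedralGroup 4) * r 1 * (sr 0)⁻¹ = r 3 from by decide] at h
    exact h
  have cU2 : U (sr 2) = U (sr 0) := by
    have h := central_conj U hu (r 1) (sr 0)
    rw [show (r 1 : DihedralGroup 4) * sr 0 * (r 1)⁻¹ = sr 2 from by decide] at h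
    exact h
  have cV2 : V (sr 2) = V (sr 0) := by
    have h := central_conj V hv (r 1) (sr 0)
    rw [show (r 1 : DihedralGroup 4) * sr 0 * (r 1)⁻¹ = sr 2 from by decide] at h
    exact h
  have cU3 : U (sr 3) = U (sr 1) := by
    have h := central_conj U hu (r 1) (sr 1)
    rw [show (r 1 : DihedralGroup 4) * sr 1 * (r 1)⁻¹ = sr 3 from by decide] at h
    exact h
  have cV3 : V (sr 3) = V (sr 1) := by
    have h := central_conj V hv (r 1) (sr 1)
    rw [show (r 1 : DihedralGroup 4) * sr 1 * (r 1)⁻¹ = sr 3 from by decide] at h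
    exact h
  have E0 : U (r 0) * V (r 0) + U (r 1) * V (r 1) + U (r 2) * V (r 2) + U (r 1) * V (r 1) + (U (sr 0) * V (sr 0) + U (sr 1) * V (sr 1) + U (sr 0) * V (sr 0) + U (sr 1) * V (sr 1)) = 1 := by
    have h := mulcoeff U V (r 0)
    rw [hUV, sum_d4] at h
    rw [show ((r 0 : DihedralGroup 4))⁻¹ * r 0 = r 0 from by decide, show ((r 1 : DihedralGroup 4))⁻¹ * r 0 = r 3 from by decide, show ((r 2 : DihedralGroup 4))⁻¹ * r 0 = r 2 from by decide, show ((r 3 : DihedralGroup 4))⁻¹ * r 0 = r 1 from by decide, show ((sr 0 : DihedralGroup 4))⁻¹ * r 0 = sr 0 from by decide, show ((sr 1 : DihedralGroup 4))⁻¹ * r 0 = sr 1 from by decide, show ((sr 2 : DihedralGroup 4))⁻¹ * r 0 = sr 2 from by decide, show ((sr 3 : DihedralGroup 4))⁻¹ * r 0 = sr 3 from by decide] at h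
    rw [cV1, cU1, cU2, cV2, cU3, cV3] at h
    rw [show (1 : MonoidAlgebra ℤ (DihedralGroup 4)) (r 0) = 1 from by rw [MonoidAlgebra.one_def]; exact Finsupp.single_eq_same] at h
    linarith [h]
  have E1 : U (r 0) * V (r 1) + U (r 1) * V (r 0) + U (r 2) * V (r 1) + U (r 1) * V (r 2) + (U (sr 0) * V (sr 1) + U (sr 1) * V (sr 0) + U (sr 0) * V (sr 1) + U (sr 1) * V (sr 0)) = 0 := by
    have h := mulcoeff U V (r 1)
    rw [hUV, sum_d4] at h
    rw [show ((r 0 : DihedralGroup 4))⁻¹ * r 1 = r 1 from by decide, show ((r 1 : DihedralGroup 4))⁻¹ * r 1 = r 0 from by decide, show ((r 2 : DihedralGroup 4))⁻¹ * r 1 = r 3 from by decide, show ((r 3 : DihedralGroup 4))⁻¹ * r 1 = r 2 from by decide, show ((sr 0 : DihedralGroup 4))⁻¹ * r 1 = sr 1 from by decide, show ((sr 1 : DihedralGroup 4))⁻¹ * r 1 = sr 2 from by decide, show ((sr 2 : DihedralGroup 4))⁻¹ * r 1 = sr 3 from by decide, show ((sr 3 : DihedralGroup 4))⁻¹ * r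 1 = sr 0 from by decide] at h
    rw [cV1, cU1, cV2, cU2, cV3, cU3] at h
    rw [show (1 : MonoidAlgebra ℤ (DihedralGroup 4)) (r 1) = 0 from by rw [MonoidAlgebra.one_def]; exact Finsupp.single_eq_of_ne (by decide)] at h
    linarith [h]
  have E2 : U (r 0) * V (r 2) + U (r 1) * V (r 1) + U (r 2) * V (r 0) + U (r 1) * V (r 1) + (U (sr 0) * V (sr 0) + U (sr 1) * V (sr 1) + U (sr 0) * V (sr 0) + U (sr 1) * V (sr 1)) = 0 := by
    have h := mulcoeff U V (r 2)
    rw [hUV, sum_d4] at h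
    rw [show ((r 0 : DihedralGroup 4))⁻¹ * r 2 = r 2 from by decide, show ((r 1 : DihedralGroup 4))⁻¹ * r 2 = r 1 from by decide, show ((r 2 : DihedralGroup 4))⁻¹ * r 2 = r 0 from by decide, show ((r 3 : DihedralGroup 4))⁻¹ * r 2 = r 3 from by decide, show ((sr 0 : DihedralGroup 4))⁻¹ * r 2 = sr 2 from by decide, show ((sr 1 : DihedralGroup 4))⁻¹ * r 2 = sr 3 from by decide, show ((sr 2 : DihedralGroup 4))⁻¹ * r 2 = sr 0 from by decide, show ((sr 3 : DihedralGroup 4))⁻¹ * r 2 = sr 1 from by decide] at h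
    rw [cU1, cV1, cV2, cV3, cU2, cU3] at h
    rw [show (1 : MonoidAlgebra ℤ (DihedralGroup 4)) (r 2) = 0 from by rw [MonoidAlgebra.one_def]; exact Finsupp.single_eq_of_ne (by decide)] at h
    linarith [h]
  have E3 : U (r 0) * V (sr 0) + U (r 1) * V (sr 1) + U (r 2) * V (sr 0) + U (r 1) * V (sr 1) + (U (sr 0) * V (r 0) + U (sr 1) * V (r 1) + U (sr 0) * V (r 2) + U (sr 1) * V (r 1)) = 0 := by
    have h := mulcoeff U V (sr 0)
    rw [hUV, sum_d4] at h
    rw [show ((r 0 : DihedralGroup 4))⁻¹ * sr 0 = sr 0 from by decide, show ((r 1 : DihedralGroup 4))⁻¹ * sr 0 = sr 1 from by decide, show ((r 2 : DihedralGroup 4))⁻¹ * sr 0 = sr 2 from by decide, show ((r 3 : DihedralGroup 4))⁻¹ * sr 0 = sr 3 from by decide, show ((sr 0 : DihedralGroup 4))⁻¹ * sr 0 = r 0 from by decide, show ((sr 1 : DihedralGroup 4))⁻¹ * sr 0 = r 3 from by decide, show ((sr 2 : DihedralGroup 4))⁻¹ * sr 0 = r 2 from by decide, show ((sr 3 : DihedralGroup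 4))⁻¹ * sr 0 = r 1 from by decide] at h
    rw [cV2, cU1, cV3, cV1, cU2, cU3] at h
    rw [show (1 : MonoidAlgebra ℤ (DihedralGroup 4)) (sr 0) = 0 from by rw [MonoidAlgebra.one_def]; exact Finsupp.single_eq_of_ne (by decide)] at h
    linarith [h]
  have E4 : U (r 0) * V (sr 1) + U (r 1) * V (sr 0) + U (r 2) * V (sr 1) + U (r 1) * V (sr 0) + (U (sr 0) * V (r 1) + U (sr 1) * V (r 0) + U (sr 0) * V (r 1) + U (sr 1) * V (r 2)) = 0 := by
    have h := mulcoeff U V (sr 1)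
    rw [hUV, sum_d4] at h
    rw [show ((r 0 : DihedralGroup 4))⁻¹ * sr 1 = sr 1 from by decide, show ((r 1 : DihedralGroup 4))⁻¹ * sr 1 = sr 2 from by decide, show ((r 2 : DihedralGroup 4))⁻¹ * sr 1 = sr 3 from by decide, show ((r 3 : DihedralGroup 4))⁻¹ * sr 1 = sr 0 from by decide, show ((sr 0 : DihedralGroup 4))⁻¹ * sr 1 = r 1 from by decide, show ((sr 1 : DihedralGroup 4))⁻¹ * sr 1 = r 0 from by decide, show ((sr 2 : DihedralGroup 4))⁻¹ * sr 1 = r 3 from by decide, show ((sr 3 : DihedralGroup 4))⁻¹ * sr 1 = r 2 from by decide] at h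
    rw [cV2, cV3, cU1, cU2, cV1, cU3] at h
    rw [show (1 : MonoidAlgebra ℤ (DihedralGroup 4)) (sr 1) = 0 from by rw [MonoidAlgebra.one_def]; exact Finsupp.single_eq_of_ne (by decide)] at h
    linarith [h]
  have f0 : (U (r 0) + 2 * U (r 1) + U (r 2) + 2 * U (sr 0) + 2 * U (sr 1)) * (V (r 0) + 2 * V (r 1) + V (r 2) + 2 * V (sr 0) + 2 * V (sr 1)) = 1 := by
    linear_combination E0 + 2 * E1 + E2 + 2 * E3 + 2 * E4
  have s0 := Int.isUnit_iff.mp (IsUnit.of_mul_eq_one _ f0)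
  have f1 : (U (r 0) + 2 * U (r 1) + U (r 2) - 2 * U (sr 0) - 2 * U (sr 1)) * (V (r 0) + 2 * V (r 1) + V (r 2) - 2 * V (sr 0) - 2 * V (sr 1)) = 1 := by
    linear_combination E0 + 2 * E1 + E2 - 2 * E3 - 2 * E4
  have s1 := Int.isUnit_iff.mp (IsUnit.of_mul_eq_one _ f1)
  have f2 : (U (r 0) - 2 * U (r 1) + U (r 2) + 2 * U (sr 0) - 2 * U (sr 1)) * (V (r 0) - 2 * V (r 1) + V (r 2) + 2 * V (sr 0) - 2 * V (sr 1)) = 1 := by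
    linear_combination E0 - 2 * E1 + E2 + 2 * E3 - 2 * E4
  have s2 := Int.isUnit_iff.mp (IsUnit.of_mul_eq_one _ f2)
  have f3 : (U (r 0) - 2 * U (r 1) + U (r 2) - 2 * U (sr 0) + 2 * U (sr 1)) * (V (r 0) - 2 * V (r 1) + V (r 2) - 2 * V (sr 0) + 2 * V (sr 1)) = 1 := by
    linear_combination E0 - 2 * E1 + E2 - 2 * E3 + 2 * E4
  have s3 := Int.isUnit_iff.mp (IsUnit.of_mul_eq_one _ f3)
  have f4 : (U (r 0) - U (r 2)) * (V (r 0) - V (r 2)) = 1 := by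
    linear_combination E0 - E2
  have s4 := Int.isUnit_iff.mp (IsUnit.of_mul_eq_one _ f4)
  have hval := solve4 (U (r 0)) (U (r 1)) (U (r 2)) (U (sr 0)) (U (sr 1)) s0 s1 s2 s3 s4
  have hrec : U = MonoidAlgebra.single (r 0) (U (r 0)) + MonoidAlgebra.single (r 1) (U (r 1)) + MonoidAlgebra.single (r 2) (U (r 2)) + MonoidAlgebra.single (r 3) (U (r 3)) + (MonoidAlgebra.single (sr 0) (U (sr 0)) + MonoidAlgebra.single (sr 1) (U (sr 1)) + MonoidAlgebra.single (sr 2) (U (sr 2)) + MonoidAlgebra.single (sr 3) (U (sr 3))) := by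
    conv_lhs => rw [sumsingle U]
    exact sum_d4 _
  rw [cU1, cU2, cU3] at hrec
  rcases hval with ⟨v0, v1, v2, v3, v4⟩ | ⟨v0, v1, v2, v3, v4⟩ | ⟨v0, v1, v2, v3, v4⟩ | ⟨v0, v1, v2, v3, v4⟩
  · -- case r 0 1
    refine ⟨(1 : DihedralGroup 4), Subgroup.one_mem _, Or.inl ?_⟩
    rw [hrec, v0, v1, v2, v3, v4]
    simp [MonoidAlgebra.of_apply, DihedralGroup.one_def, -DihedralGroup.r_zero]
  · -- case r 0 -1
    refine ⟨(1 : DihedralGroup 4), Subgroup.one_mem _, Or.inr ?_⟩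
    rw [hrec, v0, v1, v2, v3, v4]
    simp [MonoidAlgebra.of_apply, DihedralGroup.one_def, -DihedralGroup.r_zero]
  · -- case r 2 1
    refine ⟨r 2, Subgroup.mem_center_iff.mpr (by decide), Or.inl ?_⟩
    rw [hrec, v0, v1, v2, v3, v4]
    simp [MonoidAlgebra.of_apply, DihedralGroup.one_def, -DihedralGroup.r_zero]
  · -- case r 2 -1
    refine ⟨r 2, Subgroup.mem_center_iff.mpr (by decide), Or.inr ?_⟩
    rw [hrec, v0, v1, v2, v3, v4]
    simp [MonoidAlgebra.of_apply, DihedralGroup.one_def, -DihedralGroup.r_zero]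

lemma solve6 (a0 a1 a2 a3 a4 a5 : ℤ)
    (s0 : a0 + 2 * a1 + 2 * a2 + a3 + 3 * a4 + 3 * a5 = 1 ∨ a0 + 2 * a1 + 2 * a2 + a3 + 3 * a4 + 3 * a5 = -1)
    (s1 : a0 + 2 * a1 + 2 * a2 + a3 - 3 * a4 - 3 * a5 = 1 ∨ a0 + 2 * a1 + 2 * a2 + a3 - 3 * a4 - 3 * a5 = -1)
    (s2 : a0 - 2 * a1 + 2 * a2 - a3 + 3 * a4 - 3 * a5 = 1 ∨ a0 - 2 * a1 + 2 * a2 - a3 + 3 * a4 - 3 * a5 = -1)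
    (s3 : a0 - 2 * a1 + 2 * a2 - a3 - 3 * a4 + 3 * a5 = 1 ∨ a0 - 2 * a1 + 2 * a2 - a3 - 3 * a4 + 3 * a5 = -1)
    (s4 : a0 + a1 - a2 - a3 = 1 ∨ a0 + a1 - a2 - a3 = -1)
    (s5 : a0 - a1 - a2 + a3 = 1 ∨ a0 - a1 - a2 + a3 = -1) :
    (a0 = 1 ∧ a1 = 0 ∧ a2 = 0 ∧ a3 = 0 ∧ a4 = 0 ∧ a5 = 0) ∨
    (a0 = -1 ∧ a1 = 0 ∧ a2 = 0 ∧ a3 = 0 ∧ a4 = 0 ∧ a5 = 0) ∨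
    (a0 = 0 ∧ a1 = 0 ∧ a2 = 0 ∧ a3 = 1 ∧ a4 = 0 ∧ a5 = 0) ∨
    (a0 = 0 ∧ a1 = 0 ∧ a2 = 0 ∧ a3 = -1 ∧ a4 = 0 ∧ a5 = 0) := by
  have hsr : a4 = 0 ∧ a5 = 0 := by
    clear s4 s5
    rcases s0 with h0|h0 <;> rcases s1 with h1|h1 <;> rcases s2 with h2|h2 <;> rcases s3 with h3|h3 <;> omega
  obtain ⟨e1, e2⟩ := hsr
  clear s1 s3
  rcases s0 with h0|h0 <;> rcases s2 with h2|h2 <;> rcases s4 with h4|h4 <;> rcases s5 with h5|h5 <;> omega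

set_option maxHeartbeats 2000000 in
lemma cutD6 : HasCut (DihedralGroup 6) := by
  intro u hu
  set U : MonoidAlgebra ℤ (DihedralGroup 6) := (↑u : MonoidAlgebra ℤ (DihedralGroup 6)) with hUdef
  set V : MonoidAlgebra ℤ (DihedralGroup 6) := (↑u⁻¹ : MonoidAlgebra ℤ (DihedralGroup 6)) with hVdef
  have hv : V ∈ Subring.center _ := inv_central u hu
  have hUV : U * V = 1 := by rw [hUdef, hVdef]; exact Units.mul_inv u
  have cU1 : U (r 5) = U (r 1) := by
    have h := central_conj U hu (sr 0) (r 1)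
    rw [show (sr 0 : DihedralGroup 6) * r 1 * (sr 0)⁻¹ = r 5 from by decide] at h
    exact h
  have cV1 : V (r 5) = V (r 1) := by
    have h := central_conj V hv (sr 0) (r 1)
    rw [show (sr 0 : DihedralGroup 6) * r 1 * (sr 0)⁻¹ = r 5 from by decide] at h
    exact h
  have cU2 : U (r 4) = U (r 2) := by
    have h := central_conj U hu (sr 0) (r 2)
    rw [show (sr 0 : DihedralGroup 6) * r 2 * (sr 0)⁻¹ = r 4 from by decide] at h
    exact h
  have cV2 : V (r 4) = V (r 2) := by
    have h := central_conj V hv (sr 0) (r 2)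
    rw [show (sr 0 : DihedralGroup 6) * r 2 * (sr 0)⁻¹ = r 4 from by decide] at h
    exact h
  have cU3 : U (sr 2) = U (sr 0) := by
    have h := central_conj U hu (r 2) (sr 0)
    rw [show (r 2 : DihedralGroup 6) * sr 0 * (r 2)⁻¹ = sr 2 from by decide] at h
    exact h
  have cV3 : V (sr 2) = V (sr 0) := by
    have h := central_conj V hv (r 2) (sr 0)
    rw [show (r 2 : DihedralGroup 6) * sr 0 * (r 2)⁻¹ = sr 2 from by decide] at h
    exact h
  have cU4 : U (sr 4) = U (sr 0) := by
    have h := central_conj U hu (r 1) (sr 0)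
    rw [show (r 1 : DihedralGroup 6) * sr 0 * (r 1)⁻¹ = sr 4 from by decide] at h
    exact h
  have cV4 : V (sr 4) = V (sr 0) := by
    have h := central_conj V hv (r 1) (sr 0)
    rw [show (r 1 : DihedralGroup 6) * sr 0 * (r 1)⁻¹ = sr 4 from by decide] at h
    exact h
  have cU5 : U (sr 3) = U (sr 1) := by
    have h := central_conj U hu (r 2) (sr 1)
    rw [show (r 2 : DihedralGroup 6) * sr 1 * (r 2)⁻¹ = sr 3 from by decide] at h
    exact h
  have cV5 : V (sr 3) = V (sr 1) := by
    have h := central_conj V hv (r 2) (sr 1)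
    rw [show (r 2 : DihedralGroup 6) * sr 1 * (r 2)⁻¹ = sr 3 from by decide] at h
    exact h
  have cU6 : U (sr 5) = U (sr 1) := by
    have h := central_conj U hu (r 1) (sr 1)
    rw [show (r 1 : DihedralGroup 6) * sr 1 * (r 1)⁻¹ = sr 5 from by decide] at h
    exact h
  have cV6 : V (sr 5) = V (sr 1) := by
    have h := central_conj V hv (r 1) (sr 1)
    rw [show (r 1 : DihedralGroup 6) * sr 1 * (r 1)⁻¹ = sr 5 from by decide] at h
    exact h
  have E0 : U (r 0) * V (r 0) + U (r 1) * V (r 1) + U (r 2) * V (r 2) + U (r 3) * V (r 3) + U (r 2) * V (r 2) + U (r 1) * V (r 1) + (U (sr 0) * V (sr 0) + U (sr 1) * V (sr 1) + U (sr 0) * V (sr 0) + U (sr 1) * V (sr 1) + U (sr 0) * V (sr 0) + U (sr 1) * V (sr 1)) = 1 := by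
    have h := mulcoeff U V (r 0)
    rw [hUV, sum_d6] at h
    rw [show ((r 0 : DihedralGroup 6))⁻¹ * r 0 = r 0 from by decide, show ((r 1 : DihedralGroup 6))⁻¹ * r 0 = r 5 from by decide, show ((r 2 : DihedralGroup 6))⁻¹ * r 0 = r 4 from by decide, show ((r 3 : DihedralGroup 6))⁻¹ * r 0 = r 3 from by decide, show ((r 4 : DihedralGroup 6))⁻¹ * r 0 = r 2 from by decide, show ((r 5 : DihedralGroup 6))⁻¹ * r 0 = r 1 from by decide, show ((sr 0 : DihedralGroup 6))⁻¹ * r 0 = sr 0 from by decide, show ((sr 1 : DihedralGroup 6))⁻¹ * r 0 = sr 1 from by decide, show ((sr 2 : DihedralGroup 6))⁻¹ * r 0 = sr 2 from by decide, show ((sr 3 : DihedralGroup 6))⁻¹ * r 0 = sr 3 from by decide, show ((sr 4 : DihedralGroup 6))⁻¹ * r 0 = sr 4 from by decide, show ((sr 5 : DihedralGroup 6))⁻¹ * r 0 = sr 5 from by decide] at h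
    rw [cV1, cV2, cU2, cU1, cU3, cV3, cU5, cV5, cU4, cV4, cU6, cV6] at h
    rw [show (1 : MonoidAlgebra ℤ (DihedralGroup 6)) (r 0) = 1 from by rw [MonoidAlgebra.one_def]; exact Finsupp.single_eq_same] at h
    linarith [h]
  have E1 : U (r 0) * V (r 1) + U (r 1) * V (r 0) + U (r 2) * V (r 1) + U (r 3) * V (r 2) + U (r 2) * V (r 3) + U (r 1) * V (r 2) + (U (sr 0) * V (sr 1) + U (sr 1) * V (sr 0) + U (sr 0) * V (sr 1) + U (sr 1) * V (sr 0) + U (sr 0) * V (sr 1) + U (sr 1) * V (sr 0)) = 0 := by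
    have h := mulcoeff U V (r 1)
    rw [hUV, sum_d6] at h
    rw [show ((r 0 : DihedralGroup 6))⁻¹ * r 1 = r 1 from by decide, show ((r 1 : DihedralGroup 6))⁻¹ * r 1 = r 0 from by decide, show ((r 2 : DihedralGroup 6))⁻¹ * r 1 = r 5 from by decide, show ((r 3 : DihedralGroup 6))⁻¹ * r 1 = r 4 from by decide, show ((r 4 : DihedralGroup 6))⁻¹ * r 1 = r 3 from by decide, show ((r 5 : DihedralGroup 6))⁻¹ * r 1 = r 2 from by decide, show ((sr 0 : DihedralGroup 6))⁻¹ * r 1 = sr 1 from by decide, show ((sr 1 : DihedralGroup 6))⁻¹ * r 1 = sr 2 from by decide, show ((sr 2 : DihedralGroup 6))⁻¹ * r 1 = sr 3 from by decide, show ((sr 3 : DihedralGroup 6))⁻¹ * r 1 = sr 4 from by decide, show ((sr 4 : DihedralGroup 6))⁻¹ * r 1 = sr 5 from by decide, show ((sr 5 : DihedralGroup 6))⁻¹ * r 1 = sr 0 from by decide] at h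
    rw [cV1, cV2, cU2, cU1, cV3, cU3, cV5, cU5, cV4, cU4, cV6, cU6] at h
    rw [show (1 : MonoidAlgebra ℤ (DihedralGroup 6)) (r 1) = 0 from by rw [MonoidAlgebra.one_def]; exact Finsupp.single_eq_of_ne (by decide)] at h
    linarith [h]
  have E2 : U (r 0) * V (r 2) + U (r 1) * V (r 1) + U (r 2) * V (r 0) + U (r 3) * V (r 1) + U (r 2) * V (r 2) + U (r 1) * V (r 3) + (U (sr 0) * V (sr 0) + U (sr 1) * V (sr 1) + U (sr 0) * V (sr 0) + U (sr 1) * V (sr 1) + U (sr 0) * V (sr 0) + U (sr 1) * V (sr 1)) = 0 := by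
    have h := mulcoeff U V (r 2)
    rw [hUV, sum_d6] at h
    rw [show ((r 0 : DihedralGroup 6))⁻¹ * r 2 = r 2 from by decide, show ((r 1 : DihedralGroup 6))⁻¹ * r 2 = r 1 from by decide, show ((r 2 : DihedralGroup 6))⁻¹ * r 2 = r 0 from by decide, show ((r 3 : DihedralGroup 6))⁻¹ * r 2 = r 5 from by decide, show ((r 4 : DihedralGroup 6))⁻¹ * r 2 = r 4 from by decide, show ((r 5 : DihedralGroup 6))⁻¹ * r 2 = r 3 from by decide, show ((sr 0 : DihedralGroup 6))⁻¹ * r 2 = sr 2 from by decide, show ((sr 1 : DihedralGroup 6))⁻¹ * r 2 = sr 3 from by decide, show ((sr 2 : DihedralGroup 6))⁻¹ * r 2 = sr 4 from by decide, show ((sr 3 : DihedralGroup 6))⁻¹ * r 2 = sr 5 from by decide, show ((sr 4 : DihedralGroup 6))⁻¹ * r 2 = sr 0 from by decide, show ((sr 5 : DihedralGroup 6))⁻¹ * r 2 = sr 1 from by decide] at h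
    rw [cV1, cU2, cV2, cU1, cV3, cV5, cU3, cV4, cU5, cV6, cU4, cU6] at h
    rw [show (1 : MonoidAlgebra ℤ (DihedralGroup 6)) (r 2) = 0 from by rw [MonoidAlgebra.one_def]; exact Finsupp.single_eq_of_ne (by decide)] at h
    linarith [h]
  have E3 : U (r 0) * V (r 3) + U (r 1) * V (r 2) + U (r 2) * V (r 1) + U (r 3) * V (r 0) + U (r 2) * V (r 1) + U (r 1) * V (r 2) + (U (sr 0) * V (sr 1) + U (sr 1) * V (sr 0) + U (sr 0) * V (sr 1) + U (sr 1) * V (sr 0) + U (sr 0) * V (sr 1) + U (sr 1) * V (sr 0)) = 0 := by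
    have h := mulcoeff U V (r 3)
    rw [hUV, sum_d6] at h
    rw [show ((r 0 : DihedralGroup 6))⁻¹ * r 3 = r 3 from by decide, show ((r 1 : DihedralGroup 6))⁻¹ * r 3 = r 2 from by decide, show ((r 2 : DihedralGroup 6))⁻¹ * r 3 = r 1 from by decide, show ((r 3 : DihedralGroup 6))⁻¹ * r 3 = r 0 from by decide, show ((r 4 : DihedralGroup 6))⁻¹ * r 3 = r 5 from by decide, show ((r 5 : DihedralGroup 6))⁻¹ * r 3 = r 4 from by decide, show ((sr 0 : DihedralGroup 6))⁻¹ * r 3 = sr 3 from by decide, show ((sr 1 : DihedralGroup 6))⁻¹ * r 3 = sr 4 from by decide, show ((sr 2 : DihedralGroup 6))⁻¹ * r 3 = sr 5 from by decide, show ((sr 3 : DihedralGroup 6))⁻¹ * r 3 = sr 0 from by decide, show ((sr 4 : DihedralGroup 6))⁻¹ * r 3 = sr 1 from by decide, show ((sr 5 : DihedralGroup 6))⁻¹ * r 3 = sr 2 from by decide] at h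
    rw [cU2, cV1, cU1, cV2, cV5, cV4, cU3, cV6, cU5, cU4, cU6, cV3] at h
    rw [show (1 : MonoidAlgebra ℤ (DihedralGroup 6)) (r 3) = 0 from by rw [MonoidAlgebra.one_def]; exact Finsupp.single_eq_of_ne (by decide)] at h
    linarith [h]
  have E4 : U (r 0) * V (sr 0) + U (r 1) * V (sr 1) + U (r 2) * V (sr 0) + U (r 3) * V (sr 1) + U (r 2) * V (sr 0) + U (r 1) * V (sr 1) + (U (sr 0) * V (r 0) + U (sr 1) * V (r 1) + U (sr 0) * V (r 2) + U (sr 1) * V (r 3) + U (sr 0) * V (r 2) + U (sr 1) * V (r 1)) = 0 := by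
    have h := mulcoeff U V (sr 0)
    rw [hUV, sum_d6] at h
    rw [show ((r 0 : DihedralGroup 6))⁻¹ * sr 0 = sr 0 from by decide, show ((r 1 : DihedralGroup 6))⁻¹ * sr 0 = sr 1 from by decide, show ((r 2 : DihedralGroup 6))⁻¹ * sr 0 = sr 2 from by decide, show ((r 3 : DihedralGroup 6))⁻¹ * sr 0 = sr 3 from by decide, show ((r 4 : DihedralGroup 6))⁻¹ * sr 0 = sr 4 from by decide, show ((r 5 : DihedralGroup 6))⁻¹ * sr 0 = sr 5 from by decide, show ((sr 0 : DihedralGroup 6))⁻¹ * sr 0 = r 0 from by decide, show ((sr 1 : DihedralGroup 6))⁻¹ * sr 0 = r 5 from by decide, show ((sr 2 : DihedralGroup 6))⁻¹ * sr 0 = r 4 from by decide, show ((sr 3 : DihedralGroup 6))⁻¹ * sr 0 = r 3 from by decide, show ((sr 4 : DihedralGroup 6))⁻¹ * sr 0 = r 2 from by decide, show ((sr 5 : DihedralGroup 6))⁻¹ * sr 0 = r 1 from by decide] at h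
    rw [cV3, cV5, cU2, cV4, cU1, cV6, cV1, cU3, cV2, cU5, cU4, cU6] at h
    rw [show (1 : MonoidAlgebra ℤ (DihedralGroup 6)) (sr 0) = 0 from by rw [MonoidAlgebra.one_def]; exact Finsupp.single_eq_of_ne (by decide)] at h
    linarith [h]
  have E5 : U (r 0) * V (sr 1) + U (r 1) * V (sr 0) + U (r 2) * V (sr 1) + U (r 3) * V (sr 0) + U (r 2) * V (sr 1) + U (r 1) * V (sr 0) + (U (sr 0) * V (r 1) + U (sr 1) * V (r 0) + U (sr 0) * V (r 1) + U (sr 1) * V (r 2) + U (sr 0) * V (r 3) + U (sr 1) * V (r 2)) = 0 := by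
    have h := mulcoeff U V (sr 1)
    rw [hUV, sum_d6] at h
    rw [show ((r 0 : DihedralGroup 6))⁻¹ * sr 1 = sr 1 from by decide, show ((r 1 : DihedralGroup 6))⁻¹ * sr 1 = sr 2 from by decide, show ((r 2 : DihedralGroup 6))⁻¹ * sr 1 = sr 3 from by decide, show ((r 3 : DihedralGroup 6))⁻¹ * sr 1 = sr 4 from by decide, show ((r 4 : DihedralGroup 6))⁻¹ * sr 1 = sr 5 from by decide, show ((r 5 : DihedralGroup 6))⁻¹ * sr 1 = sr 0 from by decide, show ((sr 0 : DihedralGroup 6))⁻¹ * sr 1 = r 1 from by decide, show ((sr 1 : DihedralGroup 6))⁻¹ * sr 1 = r 0 from by decide, show ((sr 2 : DihedralGroup 6))⁻¹ * sr 1 = r 5 from by decide, show ((sr 3 : DihedralGroup 6))⁻¹ * sr 1 = r 4 from by decide, show ((sr 4 : DihedralGroup 6))⁻¹ * sr 1 = r 3 from by decide, show ((sr 5 : DihedralGroup 6))⁻¹ * sr 1 = r 2 from by decide] at h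
    rw [cV3, cV5, cV4, cU2, cV6, cU1, cU3, cV1, cU5, cV2, cU4, cU6] at h
    rw [show (1 : MonoidAlgebra ℤ (DihedralGroup 6)) (sr 1) = 0 from by rw [MonoidAlgebra.one_def]; exact Finsupp.single_eq_of_ne (by decide)] at h
    linarith [h]
  have f0 : (U (r 0) + 2 * U (r 1) + 2 * U (r 2) + U (r 3) + 3 * U (sr 0) + 3 * U (sr 1)) * (V (r 0) + 2 * V (r 1) + 2 * V (r 2) + V (r 3) + 3 * V (sr 0) + 3 * V (sr 1)) = 1 := by
    linear_combination E0 + 2 * E1 + 2 * E2 + E3 + 3 * E4 + 3 * E5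
  have s0 := Int.isUnit_iff.mp (IsUnit.of_mul_eq_one _ f0)
  have f1 : (U (r 0) + 2 * U (r 1) + 2 * U (r 2) + U (r 3) - 3 * U (sr 0) - 3 * U (sr 1)) * (V (r 0) + 2 * V (r 1) + 2 * V (r 2) + V (r 3) - 3 * V (sr 0) - 3 * V (sr 1)) = 1 := by
    linear_combination E0 + 2 * E1 + 2 * E2 + E3 - 3 * E4 - 3 * E5
  have s1 := Int.isUnit_iff.mp (IsUnit.of_mul_eq_one _ f1)
  have f2 : (U (r 0) - 2 * U (r 1) + 2 * U (r 2) - U (r 3) + 3 * U (sr 0) - 3 * U (sr 1)) * (V (r 0) - 2 * V (r 1) + 2 * V (r 2) - V (r 3) + 3 * V (sr 0) - 3 * V (sr 1)) = 1 := by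
    linear_combination E0 - 2 * E1 + 2 * E2 - E3 + 3 * E4 - 3 * E5
  have s2 := Int.isUnit_iff.mp (IsUnit.of_mul_eq_one _ f2)
  have f3 : (U (r 0) - 2 * U (r 1) + 2 * U (r 2) - U (r 3) - 3 * U (sr 0) + 3 * U (sr 1)) * (V (r 0) - 2 * V (r 1) + 2 * V (r 2) - V (r 3) - 3 * V (sr 0) + 3 * V (sr 1)) = 1 := by
    linear_combination E0 - 2 * E1 + 2 * E2 - E3 - 3 * E4 + 3 * E5
  have s3 := Int.isUnit_iff.mp (IsUnit.of_mul_eq_one _ f3)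
  have f4 : (U (r 0) + U (r 1) - U (r 2) - U (r 3)) * (V (r 0) + V (r 1) - V (r 2) - V (r 3)) = 1 := by
    linear_combination E0 + E1 - E2 - E3
  have s4 := Int.isUnit_iff.mp (IsUnit.of_mul_eq_one _ f4)
  have f5 : (U (r 0) - U (r 1) - U (r 2) + U (r 3)) * (V (r 0) - V (r 1) - V (r 2) + V (r 3)) = 1 := by
    linear_combination E0 - E1 - E2 + E3
  have s5 := Int.isUnit_iff.mp (IsUnit.of_mul_eq_one _ f5)
  have hval := solve6 (U (r 0)) (U (r 1)) (U (r 2)) (U (r 3)) (U (sr 0)) (U (sr 1)) s0 s1 s2 s3 s4 s5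
  have hrec : U = MonoidAlgebra.single (r 0) (U (r 0)) + MonoidAlgebra.single (r 1) (U (r 1)) + MonoidAlgebra.single (r 2) (U (r 2)) + MonoidAlgebra.single (r 3) (U (r 3)) + MonoidAlgebra.single (r 4) (U (r 4)) + MonoidAlgebra.single (r 5) (U (r 5)) + (MonoidAlgebra.single (sr 0) (U (sr 0)) + MonoidAlgebra.single (sr 1) (U (sr 1)) + MonoidAlgebra.single (sr 2) (U (sr 2)) + MonoidAlgebra.single (sr 3) (U (sr 3)) + MonoidAlgebra.single (sr 4) (U (sr 4)) + MonoidAlgebra.single (sr 5) (U (sr 5))) := by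
    conv_lhs => rw [sumsingle U]
    exact sum_d6 _
  rw [cU1, cU2, cU3, cU4, cU5, cU6] at hrec
  rcases hval with ⟨v0, v1, v2, v3, v4, v5⟩ | ⟨v0, v1, v2, v3, v4, v5⟩ | ⟨v0, v1, v2, v3, v4, v5⟩ | ⟨v0, v1, v2, v3, v4, v5⟩
  · -- case r 0 1
    refine ⟨(1 : DihedralGroup 6), Subgroup.one_mem _, Or.inl ?_⟩
    rw [hrec, v0, v1, v2, v3, v4, v5]
    simp [MonoidAlgebra.of_apply, DihedralGroup.one_def, -DihedralGroup.r_zero]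
  · -- case r 0 -1
    refine ⟨(1 : DihedralGroup 6), Subgroup.one_mem _, Or.inr ?_⟩
    rw [hrec, v0, v1, v2, v3, v4, v5]
    simp [MonoidAlgebra.of_apply, DihedralGroup.one_def, -DihedralGroup.r_zero]
  · -- case r 3 1
    refine ⟨r 3, Subgroup.mem_center_iff.mpr (by decide), Or.inl ?_⟩
    rw [hrec, v0, v1, v2, v3, v4, v5]
    simp [MonoidAlgebra.of_apply, DihedralGroup.one_def, -DihedralGroup.r_zero]
  · -- case r 3 -1
    refine ⟨r 3, Subgroup.mem_center_iff.mpr (by decide), Or.inr ?_⟩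
    rw [hrec, v0, v1, v2, v3, v4, v5]
    simp [MonoidAlgebra.of_apply, DihedralGroup.one_def, -DihedralGroup.r_zero]

theorem hasCut_dihedralGroup : ∀ n ∈ ({3, 4, 6} : Set ℕ), HasCut (DihedralGroup n) := by
  intro n hn
  simp only [Set.mem_insert_iff, Set.mem_singleton_iff] at hn
  rcases hn with rfl | rfl | rfl
  · exact cutD3
  · exact cutD4
  · exact cutD6
end
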